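/- arXiv:1607.08812 — 7 statements merged into one kernel-verified Lean document; each statement's English description precedes it below -/
import Mathlib

section
/- For every tree T on n ≥ 2 vertices, the Gaussian Estrada index satisfies H(T) ≤ n - 2 + 2e^{1-n} = H(K_{1,n-1}), i.e., the star graph maximizes H among all trees on n vertices. -/
set_option maxHeartbeats 1000000

open scoped Classical
open Matrix

section Aux

lemma trace_exp_neg_herm {m : Type*} [Fintype m] [DecidableEq m]
    (M : Matrix m m ℝ) (hM : M.IsHermitian) :
    Matrix.trace (NormedSpace.exp (-M)) = ∑ i, Real.exp (-hM.eigenvalues i) := by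
  set U : Matrix m m ℝ := (hM.eigenvectorUnitary : Matrix m m ℝ) with hUdef
  have hU : IsUnit U := (Unitary.toUnits hM.eigenvectorUnitary).isUnit
  have hUinv : U⁻¹ = star U := by
    rw [Matrix.inv_eq_left_inv]; exact hM.eigenvectorUnitary.prop.1
  have h1 : -M = U * (-(Matrix.diagonal (RCLike.ofReal ∘ hM.eigenvalues))) * U⁻¹ := by
    rw [hUinv]
    conv_lhs => rw [hM.spectral_theorem, Unitary.conjStarAlgAut_apply]
    rw [Matrix.mul_neg, Matrix.neg_mul]
  rw [h1, Matrix.exp_conj _ _ hU, Matrix.trace_mul_cycle, hUinv,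
    hM.eigenvectorUnitary.prop.1, Matrix.one_mul,
    show -(Matrix.diagonal (RCLike.ofReal ∘ hM.eigenvalues))
      = Matrix.diagonal (fun i => -(hM.eigenvalues i)) by
      rw [← Matrix.diagonal_neg]; congr 1,
    Matrix.exp_diagonal, Matrix.trace_diagonal]
  congr 1
  ext i
  rw [Pi.exp_def]
  simp [← Real.exp_eq_exp_ℝ]

lemma sum_eigenvalues_eq_trace'' {m : Type*} [Fintype m] [DecidableEq m]
    (M : Matrix m m ℝ) (hM : M.IsHermitian) :
    ∑ i, hM.eigenvalues i = Matrix.trace M := by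
  conv_rhs => rw [hM.spectral_theorem, Unitary.conjStarAlgAut_apply]
  rw [Matrix.trace_mul_cycle, hM.eigenvectorUnitary.prop.1,
    Matrix.one_mul, Matrix.trace_diagonal]
  simp

lemma chord_exp (b x : ℝ) (hb : 0 < b) (h0 : 0 ≤ x) (hxb : x ≤ b) :
    Real.exp (-x) ≤ 1 + x * ((Real.exp (-b) - 1) / b) := by
  have key := convexOn_exp.2 (Set.mem_univ (0:ℝ)) (Set.mem_univ (-b))
    (show (0:ℝ) ≤ 1 - x / b by
      have : x / b ≤ 1 := (div_le_one hb).2 hxb; linarith)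
    (div_nonneg h0 hb.le) (show (1 - x / b) + x / b = 1 by ring)
  simp only [smul_eq_mul, mul_zero, zero_add, Real.exp_zero, mul_one] at key
  have harg : x / b * (-b) = -x := by field_simp
  rw [harg] at key
  have heq : 1 - x / b + x / b * Real.exp (-b) = 1 + x * ((Real.exp (-b) - 1) / b) := by
    field_simp; ring
  linarith [key]

lemma exists_eigvec {m : Type*} [Fintype m] [DecidableEq m]
    (M : Matrix m m ℝ) (hM : M.IsHermitian) (i : m) :
    ∃ v : m → ℝ, M *ᵥ v = hM.eigenvalues i • v ∧ ∃ j, v j ≠ 0 := by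
  refine ⟨fun j => hM.eigenvectorBasis i j, hM.mulVec_eigenvectorBasis i, ?_⟩
  by_contra h
  push_neg at h
  refine hM.eigenvectorBasis.orthonormal.ne_zero i ?_
  ext j
  exact h j

lemma eig_le_rowsum {m : Type*} [Fintype m] [DecidableEq m]
    (M : Matrix m m ℝ) (hM : M.IsHermitian) (hpos : ∀ i j, 0 ≤ M i j)
    (r : ℝ) (hr : ∀ i, ∑ j, M i j ≤ r) (i : m) : hM.eigenvalues i ≤ r := by
  obtain ⟨v, hv, j, hj⟩ := exists_eigvec M hM i
  obtain ⟨k, -, hk⟩ := Finset.exists_max_image Finset.univ (fun j => |v j|)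
    ⟨i, Finset.mem_univ i⟩
  have hkpos : 0 < |v k| := lt_of_lt_of_le (abs_pos.2 hj) (hk j (Finset.mem_univ j))
  have hrow : hM.eigenvalues i * v k = ∑ j, M k j * v j := by
    have := congrFun hv k
    simpa [Matrix.mulVec, dotProduct, mul_comm] using this.symm
  have habs : |hM.eigenvalues i| * |v k| ≤ r * |v k| := by
    calc |hM.eigenvalues i| * |v k| = |hM.eigenvalues i * v k| := (abs_mul _ _).symm
      _ = |∑ j, M k j * v j| := by rw [hrow]
      _ ≤ ∑ j, |M k j * v j| := Finset.abs_sum_le_sum_abs _ _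
      _ ≤ ∑ j, M k j * |v k| := by
          refine Finset.sum_le_sum fun j _ => ?_
          rw [abs_mul, abs_of_nonneg (hpos k j)]
          exact mul_le_mul_of_nonneg_left (hk j (Finset.mem_univ j)) (hpos k j)
      _ = (∑ j, M k j) * |v k| := by rw [Finset.sum_mul]
      _ ≤ r * |v k| := mul_le_mul_of_nonneg_right (hr k) (abs_nonneg _)
  exact le_trans (le_abs_self _) (le_of_mul_le_mul_right habs hkpos)

lemma eig_zero_or {m : Type*} [Fintype m] [DecidableEq m]
    (M : Matrix m m ℝ) (hM : M.IsHermitian) (b : ℝ) (h : M * M = b • M) (i : m) :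
    hM.eigenvalues i = 0 ∨ hM.eigenvalues i = b := by
  obtain ⟨v, hv, j, hj⟩ := exists_eigvec M hM i
  have h2 : (M * M) *ᵥ v = (hM.eigenvalues i * hM.eigenvalues i) • v := by
    rw [← Matrix.mulVec_mulVec, hv, Matrix.mulVec_smul, hv, smul_smul]
  rw [h, Matrix.smul_mulVec, hv, smul_smul] at h2
  have hcf := congrFun h2 j
  simp only [Pi.smul_apply, smul_eq_mul] at hcf
  have heq : hM.eigenvalues i * hM.eigenvalues i = b * hM.eigenvalues i :=
    mul_right_cancel₀ hj hcf.symm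
  have hz : hM.eigenvalues i * (hM.eigenvalues i - b) = 0 := by ring_nf; linarith [heq]
  rcases mul_eq_zero.1 hz with h' | h'
  · exact Or.inl h'
  · exact Or.inr (by linarith)

lemma acyclic_no_triangle {V : Type*} {G : SimpleGraph V} (hG : G.IsAcyclic)
    {a b c : V} (h1 : G.Adj a b) (h2 : G.Adj b c) (h3 : G.Adj c a) : False := by
  have hab := h1.ne
  have hbc := h2.ne
  have hca := h3.ne
  have hcyc : (SimpleGraph.Walk.cons h1
      (SimpleGraph.Walk.cons h2 (SimpleGraph.Walk.cons h3 SimpleGraph.Walk.nil))).IsCycle := by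
    rw [SimpleGraph.Walk.cons_isCycle_iff]
    refine ⟨?_, ?_⟩
    · simp [SimpleGraph.Walk.cons_isPath_iff, hab, hbc, hca, Ne.symm hab, Ne.symm hbc,
        Ne.symm hca]
    · simp only [SimpleGraph.Walk.edges_cons, SimpleGraph.Walk.edges_nil, List.mem_cons,
        List.not_mem_nil, or_false]
      simp [Sym2.eq_iff, hab, hbc, hca, Ne.symm hab, Ne.symm hbc, Ne.symm hca]
  exact hG _ hcyc

lemma tree_neighbor_degree_sum {n : ℕ} (G : SimpleGraph (Fin n)) (hT : G.IsTree) (i : Fin n) :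
    ∑ u ∈ G.neighborFinset i, G.degree u ≤ G.edgeFinset.card := by
  classical
  have hcard : ∑ u ∈ G.neighborFinset i, G.degree u
      = ((G.neighborFinset i).sigma fun u => G.neighborFinset u).card := by
    rw [Finset.card_sigma]
    rfl
  rw [hcard]
  refine Finset.card_le_card_of_injOn (fun p => s(p.1, p.2)) ?_ ?_
  · intro p hp
    rw [Finset.mem_coe, Finset.mem_sigma] at hp
    rw [Finset.mem_coe, SimpleGraph.mem_edgeFinset, SimpleGraph.mem_edgeSet]
    exact (SimpleGraph.mem_neighborFinset _ _ _).1 hp.2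
  · rintro ⟨u, j⟩ hp ⟨u', j'⟩ hq heq
    rw [Finset.coe_sigma] at hp hq
    simp only [Set.mem_sigma_iff, Finset.mem_coe, SimpleGraph.mem_neighborFinset] at hp hq
    simp only [Sym2.eq_iff] at heq
    rcases heq with ⟨rfl, rfl⟩ | ⟨rfl, rfl⟩
    · rfl
    · exact absurd (acyclic_no_triangle hT.IsAcyclic hp.1 hp.2 hq.1.symm) not_false

lemma adj_herm {V : Type*} [Fintype V] [DecidableEq V] (G : SimpleGraph V) :
    ((G.adjMatrix ℝ) ^ 2).IsHermitian := by
  have h : (G.adjMatrix ℝ).IsHermitian := by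
    rw [Matrix.IsHermitian, Matrix.conjTranspose_eq_transpose_of_trivial]
    exact G.isSymm_adjMatrix
  exact h.pow 2

noncomputable def starM (m : ℕ) : Matrix (Fin 1 ⊕ Fin m) (Fin 1 ⊕ Fin m) ℝ :=
  Matrix.of fun x y => match x, y with
    | Sum.inl _, Sum.inl _ => (m : ℝ)
    | Sum.inr _, Sum.inr _ => 1
    | _, _ => 0

lemma star_sq (m : ℕ) :
    (completeBipartiteGraph (Fin 1) (Fin m)).adjMatrix ℝ ^ 2 = starM m := by
  ext x y
  rw [pow_two]
  rcases x with a | b <;> rcases y with a' | b' <;>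
    simp [Matrix.mul_apply, Fintype.sum_sum_type, starM]

lemma star_idem (m : ℕ) : starM m * starM m = (m : ℝ) • starM m := by
  ext x y
  rcases x with a | b <;> rcases y with a' | b' <;>
    simp [Matrix.mul_apply, Fintype.sum_sum_type, starM]

lemma star_trace (m : ℕ) : (starM m).trace = 2 * (m : ℝ) := by
  simp [Matrix.trace, Fintype.sum_sum_type, starM, Matrix.diag]
  ring

end Aux

/-- Among all trees on `n ≥ 2` vertices, the star graph maximizes the Gaussian Estrada
index: `H(T) ≤ n - 2 + 2 e^{1-n} = H(K_{1,n-1})`. -/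
theorem gaussian_estrada_tree_le_star (n : ℕ) (hn : 2 ≤ n) (G : SimpleGraph (Fin n))
    (hT : G.IsTree) :
    Matrix.trace (NormedSpace.exp (-((G.adjMatrix ℝ) ^ 2))) ≤
        (n : ℝ) - 2 + 2 * Real.exp (1 - (n : ℝ)) ∧
      Matrix.trace (NormedSpace.exp
          (-(((completeBipartiteGraph (Fin 1) (Fin (n - 1))).adjMatrix ℝ) ^ 2))) =
        (n : ℝ) - 2 + 2 * Real.exp (1 - (n : ℝ)) := by
  have hn1 : (1:ℕ) ≤ n := by omega
  have hcast : ((n - 1 : ℕ) : ℝ) = (n : ℝ) - 1 := by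
    rw [Nat.cast_sub hn1]; norm_num
  have hb : (0:ℝ) < (n : ℝ) - 1 := by
    have : (2:ℝ) ≤ n := by exact_mod_cast hn
    linarith
  constructor
  · -- tree part
    have hM : ((G.adjMatrix ℝ) ^ 2).IsHermitian := adj_herm G
    set M := (G.adjMatrix ℝ) ^ 2 with hMdef
    rw [trace_exp_neg_herm M hM]
    have hpsd : M.PosSemidef := by
      have h := Matrix.posSemidef_conjTranspose_mul_self (G.adjMatrix ℝ)
      rwa [Matrix.conjTranspose_eq_transpose_of_trivial, G.transpose_adjMatrix,
        ← pow_two] at h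
    have hnonneg : ∀ i, 0 ≤ hM.eigenvalues i := fun i => hpsd.eigenvalues_nonneg i
    have hedge : G.edgeFinset.card = n - 1 := by
      have h := hT.card_edgeFinset
      rw [Fintype.card_fin] at h
      omega
    have hpos : ∀ i j, 0 ≤ M i j := by
      intro i j
      rw [hMdef, pow_two, Matrix.mul_apply]
      refine Finset.sum_nonneg fun k _ => mul_nonneg ?_ ?_ <;>
        · rw [SimpleGraph.adjMatrix_apply]; split <;> norm_num
    have hrowdeg : ∀ u : Fin n, ∑ j, G.adjMatrix ℝ u j = (G.degree u : ℝ) := by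
      intro u
      simp [SimpleGraph.adjMatrix_apply, SimpleGraph.degree,
        SimpleGraph.neighborFinset_eq_filter, Finset.sum_boole]
    have hrow : ∀ i, ∑ j, M i j ≤ (n : ℝ) - 1 := by
      intro i
      have h1 : ∑ j, M i j = ∑ u ∈ G.neighborFinset i, (G.degree u : ℝ) := by
        rw [hMdef, pow_two]
        simp only [SimpleGraph.adjMatrix_mul_apply]
        rw [Finset.sum_comm]
        exact Finset.sum_congr rfl fun u _ => hrowdeg u
      rw [h1, ← Nat.cast_sum]
      calc ((∑ u ∈ G.neighborFinset i, G.degree u : ℕ) : ℝ)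
          ≤ ((n - 1 : ℕ) : ℝ) := by
            exact_mod_cast hedge ▸ tree_neighbor_degree_sum G hT i
        _ = (n : ℝ) - 1 := hcast
    have hle : ∀ i, hM.eigenvalues i ≤ (n : ℝ) - 1 :=
      fun i => eig_le_rowsum M hM hpos _ hrow i
    have htr : ∑ i, hM.eigenvalues i = 2 * ((n : ℝ) - 1) := by
      rw [sum_eigenvalues_eq_trace'' M hM]
      have hdiag : M.trace = ∑ i, (G.degree i : ℝ) := by
        rw [hMdef, pow_two, Matrix.trace]
        exact Finset.sum_congr rfl fun i _ => SimpleGraph.adjMatrix_mul_self_apply_self G i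
      rw [hdiag, ← Nat.cast_sum, SimpleGraph.sum_degrees_eq_twice_card_edges, hedge]
      push_cast [Nat.cast_sub hn1]
      ring
    calc ∑ i, Real.exp (-hM.eigenvalues i)
        ≤ ∑ i, (1 + hM.eigenvalues i * ((Real.exp (-((n:ℝ)-1)) - 1) / ((n:ℝ)-1))) :=
          Finset.sum_le_sum fun i _ => chord_exp _ _ hb (hnonneg i) (hle i)
      _ = (n : ℝ) + (2*((n:ℝ)-1)) * ((Real.exp (-((n:ℝ)-1)) - 1) / ((n:ℝ)-1)) := by
          rw [Finset.sum_add_distrib, Finset.sum_const, ← Finset.sum_mul, htr]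
          simp
      _ = (n : ℝ) - 2 + 2 * Real.exp (1 - (n : ℝ)) := by
          rw [show -((n:ℝ)-1) = 1 - (n:ℝ) by ring]
          field_simp
          ring
  · -- star part
    have hM : (((completeBipartiteGraph (Fin 1) (Fin (n-1))).adjMatrix ℝ) ^ 2).IsHermitian :=
      adj_herm _
    set M := ((completeBipartiteGraph (Fin 1) (Fin (n-1))).adjMatrix ℝ) ^ 2 with hMdef
    rw [trace_exp_neg_herm M hM]
    have hid : M * M = ((n:ℝ) - 1) • M := by
      rw [hMdef, star_sq, star_idem, hcast]
    have hdich : ∀ i, hM.eigenvalues i = 0 ∨ hM.eigenvalues i = (n:ℝ) - 1 :=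
      eig_zero_or M hM _ hid
    have htr : ∑ i, hM.eigenvalues i = 2 * ((n:ℝ) - 1) := by
      rw [sum_eigenvalues_eq_trace'' M hM, hMdef, star_sq, star_trace, hcast]
    set S := Finset.univ.filter (fun i => hM.eigenvalues i = (n:ℝ) - 1) with hS
    set T := Finset.univ.filter (fun i => ¬ hM.eigenvalues i = (n:ℝ) - 1) with hTs
    have hsplit := Finset.sum_filter_add_sum_filter_not Finset.univ
      (fun i => hM.eigenvalues i = (n:ℝ) - 1) (fun i => hM.eigenvalues i)
    have h1 : ∑ i ∈ S, hM.eigenvalues i = S.card * ((n:ℝ) - 1) := by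
      rw [Finset.sum_congr rfl (fun i hi => (Finset.mem_filter.1 hi).2),
        Finset.sum_const, nsmul_eq_mul]
    have h2 : ∑ i ∈ T, hM.eigenvalues i = 0 :=
      Finset.sum_eq_zero fun i hi => (hdich i).resolve_right (Finset.mem_filter.1 hi).2
    have hScard : S.card = 2 := by
      have hc : (S.card : ℝ) * ((n:ℝ) - 1) = 2 * ((n:ℝ) - 1) := by
        rw [← h1]
        rw [← htr, ← hsplit, ← hS, ← hTs, h2, add_zero]
      have : (S.card : ℝ) = 2 := mul_right_cancel₀ (ne_of_gt hb) hc
      exact_mod_cast this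
    have hcardsum : S.card + T.card = n := by
      have := Finset.card_filter_add_card_filter_not (s := Finset.univ)
        (p := fun i => hM.eigenvalues i = (n:ℝ) - 1)
      rw [← hS, ← hTs] at this
      rw [this]
      simp [Fintype.card_sum]
      omega
    have hTcard : T.card = n - 2 := by omega
    have hsplit2 := Finset.sum_filter_add_sum_filter_not Finset.univ
      (fun i => hM.eigenvalues i = (n:ℝ) - 1) (fun i => Real.exp (-hM.eigenvalues i))
    rw [← hsplit2, ← hS, ← hTs]
    have e1 : ∑ i ∈ S, Real.exp (-hM.eigenvalues i) = 2 * Real.exp (1 - (n:ℝ)) := by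
      rw [Finset.sum_congr rfl (fun i hi => by
        rw [(Finset.mem_filter.1 hi).2, show -((n:ℝ)-1) = 1 - (n:ℝ) by ring]),
        Finset.sum_const, hScard, nsmul_eq_mul]
      norm_num
    have e2 : ∑ i ∈ T, Real.exp (-hM.eigenvalues i) = (n:ℝ) - 2 := by
      rw [Finset.sum_congr rfl (fun i hi => by
        rw [(hdich i).resolve_right (Finset.mem_filter.1 hi).2]), Finset.sum_const, hTcard, nsmul_eq_mul, neg_zero, Real.exp_zero, mul_one,
        Nat.cast_sub hn]
      norm_num
    rw [e1, e2]
    ring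
end

section
/- For every connected simple graph G on n ≥ 2 vertices, H(G) ≤ H(K_{1,n-1}) = n - 2 + 2e^{1-n}; that is, the star graph uniquely maximizes the Gaussian Estrada index among connected graphs of order n. -/
open scoped Classical



open Matrix

/-- Chord bound: `exp (-x) ≤ 1 - (1 - exp (-c)) * min (x/c) 1` for `x ≥ 0`, `c > 0`. -/
lemma exp_neg_le_chord {c : ℝ} (hc : 0 < c) {x : ℝ} (hx : 0 ≤ x) :
    Real.exp (-x) ≤ 1 - (1 - Real.exp (-c)) * min (x / c) 1 := by
  rcases le_or_gt x c with h | h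
  · have hxc0 : 0 ≤ x / c := div_nonneg hx hc.le
    have hxc1 : x / c ≤ 1 := (div_le_one hc).mpr h
    have hmin : min (x / c) 1 = x / c := min_eq_left hxc1
    have hcv := convexOn_exp.2 (Set.mem_univ (0:ℝ)) (Set.mem_univ (-c))
      (sub_nonneg.mpr hxc1) hxc0 (by ring)
    have harg : (1 - x / c) • (0:ℝ) + (x / c) • (-c) = -x := by
      field_simp
      rw [smul_eq_mul, smul_eq_mul, mul_zero, zero_add, mul_neg, div_mul_cancel₀ x hc.ne']
    rw [harg] at hcv
    rw [hmin]
    calc Real.exp (-x) ≤ (1 - x / c) * Real.exp 0 + (x / c) * Real.exp (-c) := by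
          simpa [smul_eq_mul] using hcv
      _ = 1 - (1 - Real.exp (-c)) * (x / c) := by rw [Real.exp_zero]; ring
  · have hmin : min (x / c) 1 = 1 := min_eq_right ((one_le_div hc).mpr h.le)
    rw [hmin]
    have := Real.exp_le_exp.mpr (neg_le_neg h.le)
    linarith

lemma min_div_sum_le {ι : Type*} {s : Finset ι} {f : ι → ℝ} {c : ℝ} (hc : 0 < c)
    (hf : ∀ i ∈ s, 0 ≤ f i) :
    min ((∑ i ∈ s, f i) / c) 1 ≤ ∑ i ∈ s, min (f i / c) 1 := by
  by_cases hall : ∀ i ∈ s, f i ≤ c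
  · have : ∀ i ∈ s, min (f i / c) 1 = f i / c := fun i hi =>
      min_eq_left ((div_le_one hc).mpr (hall i hi))
    rw [Finset.sum_congr rfl this, ← Finset.sum_div]
    exact min_le_left _ _
  · push_neg at hall
    obtain ⟨j, hj, hjc⟩ := hall
    have h1 : (1:ℝ) ≤ ∑ i ∈ s, min (f i / c) 1 := by
      have hterm : min (f j / c) 1 = 1 := min_eq_right ((one_le_div hc).mpr hjc.le)
      calc (1:ℝ) = min (f j / c) 1 := hterm.symm
        _ ≤ ∑ i ∈ s, min (f i / c) 1 := Finset.single_le_sum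
            (fun i hi => le_min (div_nonneg (hf i hi) hc.le) zero_le_one) hj
    exact le_trans (min_le_right _ _) h1

/-- The key scalar estimate. -/
lemma key_scalar {n : ℕ} (hn : 2 ≤ n) (μ : Fin n → ℝ) (h0 : ∀ i, 0 ≤ μ i)
    (hmax : ∀ i, μ i ≤ (∑ j, μ j) - ((n : ℝ) - 1))
    (hsum : 2 * ((n : ℝ) - 1) ≤ ∑ j, μ j) :
    ∑ i, Real.exp (-μ i) ≤ (n : ℝ) - 2 + 2 * Real.exp (1 - (n : ℝ)) := by
  set c : ℝ := (n : ℝ) - 1 with hc_def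
  have hc : 0 < c := by
    have : (2:ℝ) ≤ (n:ℝ) := by exact_mod_cast hn
    simp only [hc_def]; linarith
  set T : ℝ := ∑ i, min (μ i / c) 1 with hT_def
  have hecnn : 0 < 1 - Real.exp (-c) := by
    have : Real.exp (-c) < 1 := Real.exp_lt_one_iff.mpr (by linarith)
    linarith
  have hT2 : (2:ℝ) ≤ T := by
    by_cases hall : ∀ i, μ i ≤ c
    · have : T = (∑ i, μ i) / c := by
        rw [hT_def, Finset.sum_div]
        exact Finset.sum_congr rfl fun i _ => min_eq_left ((div_le_one hc).mpr (hall i))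
      rw [this, le_div_iff₀ hc]
      linarith
    · push_neg at hall
      obtain ⟨i₀, hi₀⟩ := hall
      have hsplit : T = min (μ i₀ / c) 1 + ∑ i ∈ Finset.univ.erase i₀, min (μ i / c) 1 := by
        rw [hT_def, ← Finset.add_sum_erase _ _ (Finset.mem_univ i₀)]
      have h1 : min (μ i₀ / c) 1 = 1 := min_eq_right ((one_le_div hc).mpr hi₀.le)
      have h2 : (1:ℝ) ≤ ∑ i ∈ Finset.univ.erase i₀, min (μ i / c) 1 := by
        have hrest : c ≤ ∑ i ∈ Finset.univ.erase i₀, μ i := by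
          have := hmax i₀
          have hsub : ∑ i ∈ Finset.univ.erase i₀, μ i = (∑ j, μ j) - μ i₀ := by
            rw [← Finset.add_sum_erase _ _ (Finset.mem_univ i₀)]; ring
          rw [hsub]; linarith
        have := min_div_sum_le (s := Finset.univ.erase i₀) (f := μ) hc
          (fun i _ => h0 i)
        have hmin1 : min ((∑ i ∈ Finset.univ.erase i₀, μ i) / c) 1 = 1 :=
          min_eq_right ((one_le_div hc).mpr hrest)
        rw [hmin1] at this; exact this
      rw [hsplit, h1]; linarith
  have hstep : ∑ i, Real.exp (-μ i) ≤ (n:ℝ) - (1 - Real.exp (-c)) * T := by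
    have : ∑ i, Real.exp (-μ i) ≤ ∑ i : Fin n, (1 - (1 - Real.exp (-c)) * min (μ i / c) 1) :=
      Finset.sum_le_sum fun i _ => exp_neg_le_chord hc (h0 i)
    calc ∑ i, Real.exp (-μ i)
        ≤ ∑ i : Fin n, (1 - (1 - Real.exp (-c)) * min (μ i / c) 1) := this
      _ = (n:ℝ) - (1 - Real.exp (-c)) * T := by
          simp only [Finset.sum_sub_distrib, ← Finset.mul_sum, ← hT_def]
          simp
  have hfin : (n:ℝ) - (1 - Real.exp (-c)) * T ≤ (n:ℝ) - (1 - Real.exp (-c)) * 2 := by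
    have := mul_le_mul_of_nonneg_left hT2 hecnn.le
    linarith
  have hexp : Real.exp (-c) = Real.exp (1 - (n:ℝ)) := by
    congr 1; simp only [hc_def]; ring
  calc ∑ i, Real.exp (-μ i) ≤ (n:ℝ) - (1 - Real.exp (-c)) * 2 := le_trans hstep hfin
    _ = (n : ℝ) - 2 + 2 * Real.exp (1 - (n : ℝ)) := by rw [hexp]; ring

lemma trace_conj_unitary {V : Type*} [Fintype V] [DecidableEq V]
    (U : Matrix.unitaryGroup V ℝ) (X : Matrix V V ℝ) :
    ((U : Matrix V V ℝ) * X * star (U : Matrix V V ℝ)).trace = X.trace := by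
  rw [Matrix.trace_mul_cycle]
  rw [show star (U : Matrix V V ℝ) * (U : Matrix V V ℝ) = 1 from
    Matrix.UnitaryGroup.star_mul_self U, one_mul]

lemma trace_eq_sum_eigs {V : Type*} [Fintype V] [DecidableEq V] {M : Matrix V V ℝ}
    (hM : M.IsHermitian) : M.trace = ∑ i, hM.eigenvalues i := by
  conv_lhs => rw [hM.spectral_theorem]
  rw [Unitary.conjStarAlgAut_apply, trace_conj_unitary hM.eigenvectorUnitary, Matrix.trace_diagonal]
  simp

lemma trace_exp_eq_sum_exp {V : Type*} [Fintype V] [DecidableEq V] {M : Matrix V V ℝ}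
    (hM : M.IsHermitian) :
    (NormedSpace.exp M).trace = ∑ i, Real.exp (hM.eigenvalues i) := by
  set U : Matrix V V ℝ := (hM.eigenvectorUnitary : Matrix V V ℝ) with hU_def
  let Uu : (Matrix V V ℝ)ˣ := Unitary.toUnits hM.eigenvectorUnitary
  have hUu : (Uu : Matrix V V ℝ) = U := rfl
  have hUui : ((Uu⁻¹ : (Matrix V V ℝ)ˣ) : Matrix V V ℝ) = star U := rfl
  have hst : M = (Uu : Matrix V V ℝ) * Matrix.diagonal (RCLike.ofReal ∘ hM.eigenvalues) *
      ((Uu⁻¹ : (Matrix V V ℝ)ˣ) : Matrix V V ℝ) := by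
    rw [hUu, hUui]; exact hM.spectral_theorem.trans (by rw [Unitary.conjStarAlgAut_apply])
  conv_lhs => rw [hst, Matrix.exp_units_conj Uu, hUu, hUui]
  rw [trace_conj_unitary hM.eigenvectorUnitary, Matrix.exp_diagonal, Matrix.trace_diagonal]
  simp [Real.exp_eq_exp_ℝ]

lemma eig_sq_nonneg {V : Type*} [Fintype V] {A : Matrix V V ℝ} (hA : Aᵀ = A) {v : V → ℝ}
    (hv : v ≠ 0) {t : ℝ} (h : (A * A) *ᵥ v = t • v) : 0 ≤ t := by
  have hvv : 0 < v ⬝ᵥ v := by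
    obtain ⟨i, hi⟩ := Function.ne_iff.mp hv
    refine Finset.sum_pos' (fun j _ => mul_self_nonneg _) ⟨i, Finset.mem_univ i, ?_⟩
    exact mul_self_pos.mpr hi
  have key : v ⬝ᵥ ((A * A) *ᵥ v) = (A *ᵥ v) ⬝ᵥ (A *ᵥ v) := by
    rw [← Matrix.mulVec_mulVec, Matrix.dotProduct_mulVec (A := A)]
    congr 1
    rw [← Matrix.mulVec_transpose, hA]
  have h2 : v ⬝ᵥ ((A * A) *ᵥ v) = t * (v ⬝ᵥ v) := by
    rw [h, dotProduct_smul, smul_eq_mul]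
  have h3 : 0 ≤ t * (v ⬝ᵥ v) := by
    rw [← h2, key]
    exact Finset.sum_nonneg fun j _ => mul_self_nonneg _
  exact (mul_nonneg_iff_of_pos_right hvv).mp h3

lemma eig_le_rowsum_s7 {V : Type*} [Fintype V] [Nonempty V] {B : Matrix V V ℝ}
    (hB : ∀ i j, 0 ≤ B i j) {v : V → ℝ} (hv : v ≠ 0) {t : ℝ}
    (h : B *ᵥ v = t • v) {R : ℝ} (hR : ∀ i, ∑ j, B i j ≤ R) : t ≤ R := by
  obtain ⟨i, _, hi⟩ := Finset.exists_max_image Finset.univ (fun i => |v i|)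
    ⟨Classical.arbitrary V, Finset.mem_univ _⟩
  have hvi : 0 < |v i| := by
    obtain ⟨j, hj⟩ := Function.ne_iff.mp hv
    exact lt_of_lt_of_le (abs_pos.mpr hj) (hi j (Finset.mem_univ j))
  have happ : ∑ j, B i j * v j = t * v i := by
    have := congr_fun h i
    simpa [Matrix.mulVec, dotProduct] using this
  have habs : |t| * |v i| ≤ R * |v i| := by
    calc |t| * |v i| = |∑ j, B i j * v j| := by rw [happ, abs_mul]
      _ ≤ ∑ j, |B i j * v j| := Finset.abs_sum_le_sum_abs _ _
      _ ≤ ∑ j, B i j * |v i| := Finset.sum_le_sum fun j _ => by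
          rw [abs_mul, abs_of_nonneg (hB i j)]
          exact mul_le_mul_of_nonneg_left (hi j (Finset.mem_univ j)) (hB i j)
      _ = (∑ j, B i j) * |v i| := by rw [Finset.sum_mul]
      _ ≤ R * |v i| := mul_le_mul_of_nonneg_right (hR i) (abs_nonneg _)
  have := le_of_mul_le_mul_right habs hvi
  exact le_trans (le_abs_self t) this

lemma connected_descend {V : Type*} (G : SimpleGraph V) (hG : G.Connected) (r v : V)
    (hvr : v ≠ r) : ∃ x, G.Adj v x ∧ G.dist v r = G.dist x r + 1 := by
  obtain ⟨p, hp⟩ := hG.exists_walk_length_eq_dist v r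
  cases p with
  | nil => exact absurd rfl hvr
  | @cons _ x _ hadj q =>
    refine ⟨x, hadj, ?_⟩
    have h1 : G.dist x r ≤ q.length := SimpleGraph.dist_le q
    have ht := hG.dist_triangle (u := v) (v := x) (w := r)
    have h2 : G.dist v x = 1 := SimpleGraph.dist_eq_one_iff_adj.mpr hadj
    have h3 : q.length + 1 = G.dist v r := by
      simpa [SimpleGraph.Walk.length_cons] using hp
    omega

lemma card_le_edges {V : Type*} [Fintype V] [DecidableEq V] (G : SimpleGraph V)
    [DecidableRel G.Adj] (hG : G.Connected) (r : V) :
    Fintype.card V - 1 ≤ G.edgeFinset.card := by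
  choose x hadj hdist using fun v (h : v ≠ r) => connected_descend G hG r v h
  have key : (Finset.univ.erase r).card ≤ G.edgeFinset.card := by
    apply Finset.card_le_card_of_injOn
      (fun v => if h : v = r then s(r, r) else s(v, x v h))
    · intro v hv
      rw [Finset.mem_coe, Finset.mem_erase] at hv
      rw [Finset.mem_coe]
      dsimp only
      rw [dif_neg hv.1, SimpleGraph.mem_edgeFinset, SimpleGraph.mem_edgeSet]
      exact hadj v hv.1
    · intro v hv w hw he
      rw [Finset.mem_coe, Finset.mem_erase] at hv hw
      simp only [dif_neg hv.1, dif_neg hw.1, Sym2.eq_iff] at he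
      rcases he with ⟨h1, _⟩ | ⟨h1, h2⟩
      · exact h1
      · exfalso
        have d1 := hdist v hv.1
        have d2 := hdist w hw.1
        rw [h2] at d1
        rw [← h1] at d2
        omega
  calc Fintype.card V - 1 = (Finset.univ.erase r).card := by
        rw [Finset.card_erase_of_mem (Finset.mem_univ r), Finset.card_univ]
    _ ≤ G.edgeFinset.card := key

lemma degree_one_le {n : ℕ} (hn : 2 ≤ n) (G : SimpleGraph (Fin n)) [DecidableRel G.Adj]
    (hG : G.Connected) (k : Fin n) : 1 ≤ G.degree k := by
  have : Nontrivial (Fin n) := Fin.nontrivial_iff_two_le.mpr hn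
  obtain ⟨j, hj⟩ := exists_ne k
  rw [Nat.one_le_iff_ne_zero, ← Nat.pos_iff_ne_zero] at *
  rw [SimpleGraph.degree_pos_iff_exists_adj]
  obtain ⟨w⟩ := hG.preconnected k j
  cases w with
  | nil => exact absurd rfl hj.symm
  | @cons _ y _ hadj q => exact ⟨y, hadj⟩

lemma adj_row_sum {n : ℕ} (G : SimpleGraph (Fin n)) [DecidableRel G.Adj] (k : Fin n) :
    ∑ j, G.adjMatrix ℝ k j = (G.degree k : ℝ) := by
  simp [SimpleGraph.adjMatrix_apply, SimpleGraph.degree, SimpleGraph.neighborFinset_eq_filter,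
    Finset.sum_boole]

lemma rowsum_bound {n : ℕ} (hn : 2 ≤ n) (G : SimpleGraph (Fin n)) [DecidableRel G.Adj]
    (hG : G.Connected) (i : Fin n) :
    ∑ j, (G.adjMatrix ℝ * G.adjMatrix ℝ) i j
      ≤ (∑ k, (G.degree k : ℝ)) - ((n : ℝ) - 1) := by
  have hrs : ∑ j, (G.adjMatrix ℝ * G.adjMatrix ℝ) i j
      = ∑ k, G.adjMatrix ℝ i k * (G.degree k : ℝ) := by
    simp only [Matrix.mul_apply]
    rw [Finset.sum_comm]
    exact Finset.sum_congr rfl fun k _ => by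
      rw [← Finset.mul_sum, adj_row_sum]
  -- the complement sum
  set g : Fin n → ℝ := fun k =>
    if k = i then (G.degree i : ℝ) else if G.Adj i k then 0 else 1 with hg_def
  have hpt : ∀ k, g k ≤ (1 - G.adjMatrix ℝ i k) * (G.degree k : ℝ) := by
    intro k
    by_cases hk : k = i
    · subst hk
      have h0 : G.adjMatrix ℝ k k = 0 := by simp
      simp only [hg_def, if_pos rfl, h0, sub_zero, one_mul]
      exact le_refl _
    · by_cases ha : G.Adj i k
      · simp [hg_def, hk, ha, SimpleGraph.adjMatrix_apply]
      · have h1 : (1:ℝ) ≤ (G.degree k : ℝ) := by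
          exact_mod_cast degree_one_le hn G hG k
        simp only [hg_def, if_neg hk, if_neg ha, SimpleGraph.adjMatrix_apply]
        linarith
  have hcard : G.degree i
      + ((Finset.univ.erase i).filter (fun k => ¬ G.Adj i k)).card = n - 1 := by
    have hfil : (Finset.univ.erase i).filter (fun k => G.Adj i k) = G.neighborFinset i := by
      ext k
      simp only [Finset.mem_filter, Finset.mem_erase, Finset.mem_univ, and_true, true_and,
        SimpleGraph.mem_neighborFinset]
      exact ⟨fun h => h.2, fun h => ⟨h.ne', h⟩⟩
    have := Finset.card_filter_add_card_filter_not
      (s := Finset.univ.erase i) (p := fun k => G.Adj i k)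
    rw [hfil] at this
    rw [Finset.card_erase_of_mem (Finset.mem_univ i), Finset.card_univ] at this
    simp only [Fintype.card_fin] at this
    rw [← SimpleGraph.card_neighborFinset_eq_degree]
    omega
  have hgsum : ((n:ℝ) - 1) ≤ ∑ k, g k := by
    have hsplit : ∑ k, g k = g i + ∑ k ∈ Finset.univ.erase i, g k := by
      rw [← Finset.add_sum_erase _ _ (Finset.mem_univ i)]
    have herase : ∑ k ∈ Finset.univ.erase i, g k
        = (((Finset.univ.erase i).filter (fun k => ¬ G.Adj i k)).card : ℝ) := by
      rw [← Finset.sum_boole]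
      apply Finset.sum_congr rfl
      intro k hk
      rw [Finset.mem_erase] at hk
      simp only [hg_def, if_neg hk.1]
      by_cases ha : G.Adj i k <;> simp [ha]
    have hgi : g i = (G.degree i : ℝ) := by simp [hg_def]
    rw [hsplit, herase, hgi, show ((n:ℝ) - 1) = ((n - 1 : ℕ) : ℝ) by
      rw [Nat.cast_sub (by omega : 1 ≤ n)]; norm_num, ← hcard]
    push_cast
    linarith
  have htotal : ∑ k, (1 - G.adjMatrix ℝ i k) * (G.degree k : ℝ)
      = (∑ k, (G.degree k : ℝ)) - ∑ k, G.adjMatrix ℝ i k * (G.degree k : ℝ) := by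
    rw [← Finset.sum_sub_distrib]
    exact Finset.sum_congr rfl fun k _ => by ring
  have h1 : ((n:ℝ) - 1) ≤ ∑ k, (1 - G.adjMatrix ℝ i k) * (G.degree k : ℝ) :=
    le_trans hgsum (Finset.sum_le_sum fun k _ => hpt k)
  rw [hrs]
  linarith [htotal ▸ h1]
theorem part1 {n : ℕ} (hn : 2 ≤ n) (G : SimpleGraph (Fin n)) (hG : G.Connected) :
    Matrix.trace (NormedSpace.exp (-((G.adjMatrix ℝ) ^ 2))) ≤
      (n : ℝ) - 2 + 2 * Real.exp (1 - (n : ℝ)) := by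
  classical
  have hNE : Nonempty (Fin n) := ⟨⟨0, by omega⟩⟩
  set A := G.adjMatrix ℝ with hA_def
  have hAsymm : Aᵀ = A := G.transpose_adjMatrix
  have hAh : A.IsHermitian := by
    rw [Matrix.IsHermitian]
    ext i j
    rw [Matrix.conjTranspose_apply, star_trivial]
    calc A j i = Aᵀ i j := rfl
      _ = A i j := by rw [hAsymm]
  have hM : (-(A ^ 2)).IsHermitian := (hAh.pow 2).neg
  have htr := trace_exp_eq_sum_exp hM
  -- eigenvectors
  have heig : ∀ i, ∃ v : Fin n → ℝ, v ≠ 0 ∧ (A * A) *ᵥ v = (-hM.eigenvalues i) • v := by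
    intro i
    refine ⟨⇑(hM.eigenvectorBasis i), ?_, ?_⟩
    · intro h0
      apply hM.eigenvectorBasis.orthonormal.ne_zero i
      ext j
      exact congr_fun h0 j
    · have h1 := hM.mulVec_eigenvectorBasis i
      rw [Matrix.neg_mulVec] at h1
      have h2 : (A ^ 2) *ᵥ ⇑(hM.eigenvectorBasis i)
          = (-hM.eigenvalues i) • ⇑(hM.eigenvectorBasis i) := by
        rw [neg_smul, ← h1, neg_neg]
      rw [show A * A = A ^ 2 from (pow_two A).symm]
      exact h2
  -- nonneg entries of A * A
  have hBnn : ∀ i j, 0 ≤ (A * A) i j := by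
    intro i j
    rw [Matrix.mul_apply]
    apply Finset.sum_nonneg
    intro k _
    apply mul_nonneg <;>
      · rw [hA_def, SimpleGraph.adjMatrix_apply]
        positivity
  have hμ0 : ∀ i : Fin n, 0 ≤ -hM.eigenvalues i := by
    intro i
    obtain ⟨v, hv0, hv⟩ := heig i
    exact eig_sq_nonneg hAsymm hv0 hv
  have hμle : ∀ i : Fin n, -hM.eigenvalues i ≤ (∑ k, (G.degree k : ℝ)) - ((n : ℝ) - 1) := by
    intro i
    obtain ⟨v, hv0, hv⟩ := heig i
    exact eig_le_rowsum_s7 hBnn hv0 hv (rowsum_bound hn G hG)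
  have h2m : Matrix.trace (A * A) = ∑ k, (G.degree k : ℝ) := by
    rw [Matrix.trace]
    apply Finset.sum_congr rfl
    intro k _
    exact G.adjMatrix_mul_self_apply_self k
  have h1 := trace_eq_sum_eigs hM
  rw [Matrix.trace_neg] at h1
  have h2eq : Matrix.trace (A ^ 2) = ∑ k, (G.degree k : ℝ) := by
    rw [pow_two]; exact h2m
  have hsneg : ∑ i : Fin n, -hM.eigenvalues i = -∑ i : Fin n, hM.eigenvalues i := by
    rw [Finset.sum_neg_distrib]
  have hsum_eq : ∑ i : Fin n, -hM.eigenvalues i = ∑ k, (G.degree k : ℝ) := by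
    rw [hsneg]; linarith
  have hs2 : 2 * ((n : ℝ) - 1) ≤ ∑ k, (G.degree k : ℝ) := by
    have hE : n - 1 ≤ G.edgeFinset.card := by
      have := card_le_edges G hG ⟨0, by omega⟩
      simpa using this
    have hdeg : ∑ k, G.degree k = 2 * G.edgeFinset.card :=
      SimpleGraph.sum_degrees_eq_twice_card_edges G
    have hnat : 2 * (n - 1) ≤ ∑ k, G.degree k := by omega
    calc 2 * ((n : ℝ) - 1) = ((2 * (n - 1) : ℕ) : ℝ) := by
          push_cast [Nat.cast_sub (by omega : 1 ≤ n)]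
          ring
      _ ≤ ((∑ k, G.degree k : ℕ) : ℝ) := by exact_mod_cast hnat
      _ = ∑ k, (G.degree k : ℝ) := by push_cast; rfl
  have hmax' : ∀ i : Fin n, -hM.eigenvalues i
      ≤ (∑ j : Fin n, -hM.eigenvalues j) - ((n : ℝ) - 1) := by
    intro i
    have := hμle i
    linarith [hsum_eq]
  have hsum' : 2 * ((n : ℝ) - 1) ≤ ∑ j : Fin n, -hM.eigenvalues j := by
    linarith [hsum_eq]
  have hkey := key_scalar hn (fun i => -hM.eigenvalues i) hμ0 hmax' hsum'
  have hconv : ∑ i : Fin n, Real.exp (hM.eigenvalues i)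
      = ∑ i : Fin n, Real.exp (-(-hM.eigenvalues i)) := by
    apply Finset.sum_congr rfl
    intro i _
    rw [neg_neg]
  rw [htr, hconv]
  exact hkey
theorem part2 {n : ℕ} (hn : 2 ≤ n) :
    Matrix.trace (NormedSpace.exp
        (-(((completeBipartiteGraph (Fin 1) (Fin (n - 1))).adjMatrix ℝ) ^ 2))) =
      (n : ℝ) - 2 + 2 * Real.exp (1 - (n : ℝ)) := by
  classical
  set m := n - 1 with hm_def
  have hm1 : 1 ≤ m := by omega
  set c : ℝ := (n : ℝ) - 1 with hc_def
  have hcast : ((m : ℝ)) = c := by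
    rw [hm_def, hc_def, Nat.cast_sub (by omega : 1 ≤ n)]
    norm_num
  have hc : 0 < c := by
    have : (2:ℝ) ≤ (n:ℝ) := by exact_mod_cast hn
    rw [hc_def]; linarith
  set G := completeBipartiteGraph (Fin 1) (Fin m) with hG_def
  set A := G.adjMatrix ℝ with hA_def
  -- entries of A
  have hAdj : ∀ (x y : Fin 1 ⊕ Fin m), A x y =
      (if (x.isLeft ∧ y.isRight ∨ x.isRight ∧ y.isLeft) then (1:ℝ) else 0) := by
    intro x y
    rw [hA_def, SimpleGraph.adjMatrix_apply]
    congr 1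
  have hAll : ∀ (a b : Fin 1), A (Sum.inl a) (Sum.inl b) = 0 := by
    intro a b; rw [hAdj]; simp
  have hAlr : ∀ (a : Fin 1) (b : Fin m), A (Sum.inl a) (Sum.inr b) = 1 := by
    intro a b; rw [hAdj]; simp
  have hArl : ∀ (a : Fin m) (b : Fin 1), A (Sum.inr a) (Sum.inl b) = 1 := by
    intro a b; rw [hAdj]; simp
  have hArr : ∀ (a b : Fin m), A (Sum.inr a) (Sum.inr b) = 0 := by
    intro a b; rw [hAdj]; simp
  -- entries of A * A
  have hentll : ∀ (a b : Fin 1), (A * A) (Sum.inl a) (Sum.inl b) = c := by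
    intro a b
    rw [Matrix.mul_apply, Fintype.sum_sum_type]
    simp only [hAll, hAlr, hArl, zero_mul, mul_one, Finset.sum_const_zero, zero_add]
    simp [hcast]
  have hentlr : ∀ (a : Fin 1) (b : Fin m), (A * A) (Sum.inl a) (Sum.inr b) = 0 := by
    intro a b
    rw [Matrix.mul_apply, Fintype.sum_sum_type]
    simp [hAll, hArr, hAlr]
  have hentrl : ∀ (a : Fin m) (b : Fin 1), (A * A) (Sum.inr a) (Sum.inl b) = 0 := by
    intro a b
    rw [Matrix.mul_apply, Fintype.sum_sum_type]
    simp [hAll, hArr, hArl]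
  have hentrr : ∀ (a b : Fin m), (A * A) (Sum.inr a) (Sum.inr b) = 1 := by
    intro a b
    rw [Matrix.mul_apply, Fintype.sum_sum_type]
    simp [hArl, hArr, hAlr]
  -- (A*A) is c-idempotent
  have hBB : (A * A) * (A * A) = c • (A * A) := by
    ext x y
    rw [Matrix.mul_apply, Fintype.sum_sum_type, Matrix.smul_apply, smul_eq_mul]
    cases x with
    | inl a =>
      cases y with
      | inl b => simp [hentll, hentlr, hentrl]
      | inr b => simp [hentll, hentlr, hentrr, hentrl]
    | inr a =>
      cases y with
      | inl b => simp [hentrl, hentrr, hentll]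
      | inr b => simp [hentrl, hentrr, hentlr, hcast]
  -- trace of A * A
  have htrB : Matrix.trace (A * A) = 2 * c := by
    rw [Matrix.trace, Fintype.sum_sum_type]
    simp only [Matrix.diag_apply, hentll, hentrr]
    simp [hcast]
    ring
  -- hermitian
  have hAsymm : Aᵀ = A := G.transpose_adjMatrix
  have hAh : A.IsHermitian := by
    rw [Matrix.IsHermitian]
    ext i j
    rw [Matrix.conjTranspose_apply, star_trivial]
    calc A j i = Aᵀ i j := rfl
      _ = A i j := by rw [hAsymm]
  have hM : (-(A ^ 2)).IsHermitian := (hAh.pow 2).neg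
  have htr := trace_exp_eq_sum_exp hM
  -- eigenvalue dichotomy
  have hdich : ∀ i, hM.eigenvalues i = 0 ∨ hM.eigenvalues i = -c := by
    intro i
    have h1 := hM.mulVec_eigenvectorBasis i
    have hv0 : ⇑(hM.eigenvectorBasis i) ≠ 0 := by
      intro h0
      apply hM.eigenvectorBasis.orthonormal.ne_zero i
      ext j; exact congr_fun h0 j
    have hBv : (A * A) *ᵥ ⇑(hM.eigenvectorBasis i)
        = (-hM.eigenvalues i) • ⇑(hM.eigenvectorBasis i) := by
      rw [Matrix.neg_mulVec] at h1
      have h2 : (A ^ 2) *ᵥ ⇑(hM.eigenvectorBasis i)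
          = (-hM.eigenvalues i) • ⇑(hM.eigenvectorBasis i) := by
        rw [neg_smul, ← h1, neg_neg]
      rw [show A * A = A ^ 2 from (pow_two A).symm]
      exact h2
    set t := hM.eigenvalues i with ht_def
    have e1 : ((A * A) * (A * A)) *ᵥ ⇑(hM.eigenvectorBasis i)
        = ((-t) * (-t)) • ⇑(hM.eigenvectorBasis i) := by
      rw [← Matrix.mulVec_mulVec, hBv, Matrix.mulVec_smul, hBv, smul_smul]
    have e2 : ((A * A) * (A * A)) *ᵥ ⇑(hM.eigenvectorBasis i)
        = (c * (-t)) • ⇑(hM.eigenvectorBasis i) := by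
      rw [hBB, Matrix.smul_mulVec, hBv, smul_smul]
    have hq := e1.symm.trans e2
    obtain ⟨j, hj⟩ := Function.ne_iff.mp hv0
    have hqq := congr_fun hq j
    simp only [Pi.smul_apply, smul_eq_mul] at hqq
    have ht2 : (-t) * (-t) = c * (-t) := mul_right_cancel₀ hj hqq
    have hfac : t * (t + c) = 0 := by ring_nf; ring_nf at ht2; linarith
    rcases mul_eq_zero.mp hfac with h | h
    · left; exact h
    · right; linarith
  -- sum of eigenvalues
  have h1 := trace_eq_sum_eigs hM
  rw [Matrix.trace_neg] at h1
  have h2eq : Matrix.trace (A ^ 2) = 2 * c := by rw [pow_two]; exact htrB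
  have hsum : ∑ i, hM.eigenvalues i = -(2 * c) := by rw [← h1, h2eq]
  -- pointwise formula
  have hpt : ∀ i, Real.exp (hM.eigenvalues i)
      = 1 + hM.eigenvalues i * ((1 - Real.exp (-c)) / c) := by
    intro i
    rcases hdich i with h | h
    · rw [h]; simp
    · rw [h]
      field_simp
      ring
  -- total count
  have hcard : (Fintype.card (Fin 1 ⊕ Fin m) : ℝ) = (n : ℝ) := by
    simp [Fintype.card_sum]
    rw [hcast]
    rw [hc_def]; ring
  have hfinal : ∑ i, Real.exp (hM.eigenvalues i)
      = (n : ℝ) - 2 + 2 * Real.exp (1 - (n : ℝ)) := by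
    rw [Finset.sum_congr rfl (fun i _ => hpt i)]
    rw [Finset.sum_add_distrib, Finset.sum_const, ← Finset.sum_mul, hsum]
    have hexpc : Real.exp (-c) = Real.exp (1 - (n : ℝ)) := by
      congr 1; rw [hc_def]; ring
    rw [← hexpc]
    rw [Finset.card_univ]
    have : (Fintype.card (Fin 1 ⊕ Fin m)) • (1:ℝ) = (n:ℝ) := by
      rw [nsmul_eq_mul, mul_one]; exact hcard
    rw [this]
    field_simp
    ring
  rw [htr, hfinal]

/-- Among all connected simple graphs on `n ≥ 2` vertices, the star graph maximizes the
Gaussian Estrada index: `H(G) ≤ H(K_{1,n-1}) = n - 2 + 2 e^{1-n}`. -/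
theorem gaussian_estrada_le_star (n : ℕ) (hn : 2 ≤ n) (G : SimpleGraph (Fin n))
    (hG : G.Connected) :
    Matrix.trace (NormedSpace.exp (-((G.adjMatrix ℝ) ^ 2))) ≤
        (n : ℝ) - 2 + 2 * Real.exp (1 - (n : ℝ)) ∧
      Matrix.trace (NormedSpace.exp
          (-(((completeBipartiteGraph (Fin 1) (Fin (n - 1))).adjMatrix ℝ) ^ 2))) =
        (n : ℝ) - 2 + 2 * Real.exp (1 - (n : ℝ)) := by
  exact ⟨part1 hn G hG, part2 hn⟩
end

section
/- For the complete graph K_n (n ≥ 2), the Gaussian communicability between distinct vertices p ≠ q equals G̃_pq = e^{-(n-1)^2}/n - 1/(n·e), while the diagonal entries equal G̃_pp = e^{-(n-1)^2}/n + (n-1)/(n·e). -/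
open scoped Classical

/-- Gaussian communicability of the complete graph `K_n` (`n ≥ 2`): the off-diagonal
entries of `exp(-A²)` equal `e^{-(n-1)²}/n - 1/(n e)` and the diagonal entries equal
`e^{-(n-1)²}/n + (n-1)/(n e)`. -/
theorem gaussian_communicability_completeGraph (n : ℕ) (hn : 2 ≤ n) :
    (∀ p q : Fin n, p ≠ q →
        NormedSpace.exp (-(((⊤ : SimpleGraph (Fin n)).adjMatrix ℝ) ^ 2)) p q =
          Real.exp (-((n : ℝ) - 1) ^ 2) / n - 1 / (n * Real.exp 1)) ∧
      (∀ p : Fin n,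
        NormedSpace.exp (-(((⊤ : SimpleGraph (Fin n)).adjMatrix ℝ) ^ 2)) p p =
          Real.exp (-((n : ℝ) - 1) ^ 2) / n + ((n : ℝ) - 1) / (n * Real.exp 1)) := by
  have hn0 : (n : ℝ) ≠ 0 := by positivity
  set E : Matrix (Fin n) (Fin n) ℝ := Matrix.of (fun _ _ => (n : ℝ)⁻¹) with hEdef
  have hE : E * E = E := by
    ext i j
    simp only [Matrix.mul_apply, hEdef, Matrix.of_apply]
    rw [Finset.sum_const, Finset.card_univ, Fintype.card_fin, nsmul_eq_mul]
    field_simp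
  have h1 : E * (1 - E) = 0 := by rw [mul_sub, mul_one, hE, sub_self]
  have h2 : (1 - E) * E = 0 := by rw [sub_mul, one_mul, hE, sub_self]
  have h3 : (1 - E) * (1 - E) = 1 - E := by
    rw [mul_sub, mul_one, sub_mul, one_mul, hE, sub_self, sub_zero]
  let φ : (ℝ × ℝ) →ₐ[ℝ] Matrix (Fin n) (Fin n) ℝ :=
  { toFun := fun x => x.1 • E + x.2 • (1 - E)
    map_one' := by simp
    map_mul' := fun x y => by
      show (x.1 * y.1) • E + (x.2 * y.2) • (1 - E) =
        (x.1 • E + x.2 • (1 - E)) * (y.1 • E + y.2 • (1 - E))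
      rw [add_mul, mul_add, mul_add, smul_mul_smul_comm, smul_mul_smul_comm,
        smul_mul_smul_comm, smul_mul_smul_comm, hE, h1, h2, h3, smul_zero, smul_zero,
        add_zero, zero_add]
    map_zero' := by simp
    map_add' := fun x y => by
      show (x.1 + y.1) • E + (x.2 + y.2) • (1 - E) =
        (x.1 • E + x.2 • (1 - E)) + (y.1 • E + y.2 • (1 - E))
      rw [add_smul, add_smul]; abel
    commutes' := fun r => by
      show r • E + r • (1 - E) = algebraMap ℝ _ r
      rw [← smul_add, add_sub_cancel, Algebra.algebraMap_eq_smul_one] }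
  have hφc : Continuous φ := by
    show Continuous fun x : ℝ × ℝ => x.1 • E + x.2 • (1 - E)
    fun_prop
  have hA : ((⊤ : SimpleGraph (Fin n)).adjMatrix ℝ) = φ (((n : ℝ) - 1, -1)) := by
    ext p q
    show _ = ((n : ℝ) - 1) • E p q + (-1 : ℝ) • ((1 : Matrix (Fin n) (Fin n) ℝ) p q - E p q)
    by_cases h : p = q
    · subst h
      simp [hEdef, Matrix.one_apply, hn0]
      field_simp
      ring
    · simp only [SimpleGraph.adjMatrix_apply, SimpleGraph.top_adj, ne_eq, h,
        not_false_eq_true, if_true, hEdef, Matrix.of_apply, Matrix.one_apply_ne h]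
      simp only [smul_eq_mul]
      field_simp
      ring
  have hA2 : -(((⊤ : SimpleGraph (Fin n)).adjMatrix ℝ) ^ 2)
      = φ ((-((n : ℝ) - 1) ^ 2, -1)) := by
    rw [hA, ← map_pow, ← map_neg]
    congr 1
    ext <;> simp
  have hexp : NormedSpace.exp (-(((⊤ : SimpleGraph (Fin n)).adjMatrix ℝ) ^ 2))
      = (Real.exp (-((n : ℝ) - 1) ^ 2)) • E + (Real.exp (-1)) • (1 - E) := by
    letI : SeminormedRing (Matrix (Fin n) (Fin n) ℝ) := Matrix.linftyOpSemiNormedRing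
    letI : NormedRing (Matrix (Fin n) (Fin n) ℝ) := Matrix.linftyOpNormedRing
    letI : NormedAlgebra ℝ (Matrix (Fin n) (Fin n) ℝ) := Matrix.linftyOpNormedAlgebra
    rw [hA2]; refine (NormedSpace.map_exp φ hφc _).symm.trans ?_
    have : NormedSpace.exp ((-((n : ℝ) - 1) ^ 2, -1) : ℝ × ℝ)
        = ((Real.exp (-((n : ℝ) - 1) ^ 2), Real.exp (-1)) : ℝ × ℝ) := by
      ext
      · rw [Prod.fst_exp, Real.exp_eq_exp_ℝ]
      · rw [Prod.snd_exp, Real.exp_eq_exp_ℝ]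
    rw [this]
    rfl
  constructor
  · intro p q hpq
    rw [hexp]
    show Real.exp (-((n : ℝ) - 1) ^ 2) * E p q
        + Real.exp (-1) * ((1 : Matrix (Fin n) (Fin n) ℝ) p q - E p q) = _
    rw [Matrix.one_apply_ne hpq]
    show Real.exp (-((n : ℝ) - 1) ^ 2) * (n : ℝ)⁻¹ + Real.exp (-1) * (0 - (n : ℝ)⁻¹) = _
    rw [Real.exp_neg 1]
    have he : Real.exp 1 ≠ 0 := Real.exp_ne_zero 1
    field_simp
    ring
  · intro p
    rw [hexp]
    show Real.exp (-((n : ℝ) - 1) ^ 2) * E p p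
        + Real.exp (-1) * ((1 : Matrix (Fin n) (Fin n) ℝ) p p - E p p) = _
    rw [Matrix.one_apply_eq]
    show Real.exp (-((n : ℝ) - 1) ^ 2) * (n : ℝ)⁻¹ + Real.exp (-1) * (1 - (n : ℝ)⁻¹) = _
    rw [Real.exp_neg 1]
    have he : Real.exp 1 ≠ 0 := Real.exp_ne_zero 1
    field_simp
end

section
/- For the complete bipartite graph K_{n1,n2} with parts V_1, V_2 of sizes n1, n2, the Gaussian subgraph centrality of a vertex p ∈ V_1 equals (exp(-A^2))_pp = (e^{-n1·n2} - 1)/n1 + 1, and for p ∈ V_2 it equals (e^{-n1·n2} - 1)/n2 + 1. -/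
open scoped Classical

lemma aux_exp_idem {𝔸 : Type*} [NormedRing 𝔸] [NormedAlgebra ℝ 𝔸] [CompleteSpace 𝔸]
    (P : 𝔸) (hP : P * P = P) (c : ℝ) :
    NormedSpace.exp (c • P) = 1 + (Real.exp c - 1) • P := by
  have hPn : ∀ k : ℕ, P ^ (k + 1) = P := by
    intro k
    induction k with
    | zero => simp
    | succ k ih => rw [pow_succ, ih, hP]
  have hsum := NormedSpace.expSeries_summable' (𝕂 := ℝ) (c • P)
  have hsr : Summable fun n : ℕ => c ^ (n + 1) / ((n + 1).factorial : ℝ) := by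
    have := Real.summable_pow_div_factorial c
    exact (summable_nat_add_iff 1).2 this
  rw [NormedSpace.exp_eq_tsum ℝ]
  beta_reduce
  rw [hsum.tsum_eq_zero_add]
  have h0 : (((0:ℕ).factorial : ℝ)⁻¹) • (c • P) ^ 0 = 1 := by simp
  rw [h0]
  have hterm : ∀ n : ℕ, ((((n+1):ℕ).factorial : ℝ)⁻¹) • (c • P) ^ (n + 1)
      = (c ^ (n+1) / ((n+1).factorial : ℝ)) • P := by
    intro n
    rw [smul_pow, hPn, smul_smul, div_eq_mul_inv, mul_comm]
  rw [tsum_congr hterm, hsr.tsum_smul_const]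
  congr 1
  have hexp : Real.exp c = ∑' n : ℕ, c ^ n / (n.factorial : ℝ) := by
    rw [Real.exp_eq_exp_ℝ, NormedSpace.exp_eq_tsum ℝ]
    exact tsum_congr fun n => by rw [smul_eq_mul, div_eq_mul_inv, mul_comm]
  have hsr' : Summable fun n : ℕ => c ^ n / (n.factorial : ℝ) := Real.summable_pow_div_factorial c
  rw [hexp, hsr'.tsum_eq_zero_add]
  simp

/-- Gaussian subgraph centrality in the complete bipartite graph `K_{n1,n2}`: for a vertex
`p` in the part of size `n1`, `(exp(-A²))_pp = (e^{-n1 n2} - 1)/n1 + 1`, and for a vertex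
in the part of size `n2`, `(exp(-A²))_pp = (e^{-n1 n2} - 1)/n2 + 1`. -/
theorem gaussian_subgraph_centrality_completeBipartiteGraph (n₁ n₂ : ℕ)
    (h₁ : 1 ≤ n₁) (h₂ : 1 ≤ n₂) :
    (∀ p : Fin n₁,
        NormedSpace.exp (-(((completeBipartiteGraph (Fin n₁) (Fin n₂)).adjMatrix ℝ) ^ 2))
            (Sum.inl p) (Sum.inl p) =
          (Real.exp (-((n₁ : ℝ) * n₂)) - 1) / n₁ + 1) ∧
      (∀ p : Fin n₂,
        NormedSpace.exp (-(((completeBipartiteGraph (Fin n₁) (Fin n₂)).adjMatrix ℝ) ^ 2))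
            (Sum.inr p) (Sum.inr p) =
          (Real.exp (-((n₁ : ℝ) * n₂)) - 1) / n₂ + 1) := by
  have h1 : (n₁ : ℝ) ≠ 0 := Nat.cast_ne_zero.2 (by omega)
  have h2 : (n₂ : ℝ) ≠ 0 := Nat.cast_ne_zero.2 (by omega)
  set c : ℝ := (n₁ : ℝ) * n₂ with hc
  have hcne : c ≠ 0 := mul_ne_zero h1 h2
  set A := (completeBipartiteGraph (Fin n₁) (Fin n₂)).adjMatrix ℝ with hA
  set B : Matrix (Fin n₁ ⊕ Fin n₂) (Fin n₁ ⊕ Fin n₂) ℝ :=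
    Matrix.of (Sum.elim (fun _ => Sum.elim (fun _ => (n₂:ℝ)) (fun _ => 0))
      (fun _ => Sum.elim (fun _ => 0) (fun _ => (n₁:ℝ)))) with hB
  have hA2 : A ^ 2 = B := by
    ext a b
    rw [pow_two, Matrix.mul_apply]
    cases a <;> cases b <;>
      simp [hA, hB, Fintype.sum_sum_type, Finset.sum_ite_eq, mul_comm]
  have hBB : B * B = c • B := by
    ext a b
    rw [Matrix.mul_apply]
    cases a <;> cases b <;>
      simp [hB, hc, Fintype.sum_sum_type, mul_comm, mul_assoc, mul_left_comm]
  set P : Matrix (Fin n₁ ⊕ Fin n₂) (Fin n₁ ⊕ Fin n₂) ℝ := c⁻¹ • B with hPdef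
  have hP : P * P = P := by
    rw [hPdef, Matrix.smul_mul, Matrix.mul_smul, hBB, smul_smul, smul_smul,
      mul_assoc, inv_mul_cancel₀ hcne, mul_one]
  have hneg : -(A ^ 2) = (-c) • P := by
    rw [hA2, hPdef, smul_smul, neg_mul, mul_inv_cancel₀ hcne, neg_smul, one_smul]
  letI : SeminormedRing (Matrix (Fin n₁ ⊕ Fin n₂) (Fin n₁ ⊕ Fin n₂) ℝ) :=
    Matrix.linftyOpSemiNormedRing
  letI : NormedRing (Matrix (Fin n₁ ⊕ Fin n₂) (Fin n₁ ⊕ Fin n₂) ℝ) :=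
    Matrix.linftyOpNormedRing
  letI : NormedAlgebra ℝ (Matrix (Fin n₁ ⊕ Fin n₂) (Fin n₁ ⊕ Fin n₂) ℝ) :=
    Matrix.linftyOpNormedAlgebra
  have hexp : NormedSpace.exp (-(A ^ 2)) = 1 + (Real.exp (-c) - 1) • P := by
    rw [hneg]; exact aux_exp_idem P hP (-c)
  constructor
  · intro p
    rw [hexp]
    simp only [Matrix.add_apply, Matrix.one_apply_eq, Matrix.smul_apply, hPdef, hB,
      Matrix.smul_apply, Matrix.of_apply, Sum.elim_inl, smul_eq_mul]
    field_simp [hc]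
    ring
  · intro p
    rw [hexp]
    simp only [Matrix.add_apply, Matrix.one_apply_eq, Matrix.smul_apply, hPdef, hB,
      Matrix.smul_apply, Matrix.of_apply, Sum.elim_inr, smul_eq_mul]
    field_simp [hc]
    ring
end

section
/- For the path graph P_n, H(P_n) = Σ_{j=1}^{n} exp(-4cos²(jπ/(n+1))), and H(P_n)/n → e^{-2}·I_0(2) as n → ∞. -/
open scoped Classical Real Matrix
open Filter Finset

/-- The modified Bessel function of the first kind of integer order `γ`. -/
noncomputable def besselI (γ : ℕ) (x : ℝ) : ℝ :=
  (1 / π) * ∫ θ in (0:ℝ)..π, Real.cos (γ * θ) * Real.exp (x * Real.cos θ)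


lemma cos_sum_eq (n m : ℕ) (hm : 0 < m) (hm2 : m < 2 * (n+1)) :
    ∑ k ∈ Finset.range n, Real.cos ((k+1) * (m * π / (n+1))) =
      if Even m then (-1 : ℝ) else 0 := by
  set N : ℝ := (n : ℝ) + 1 with hN
  have hN0 : (0:ℝ) < N := by positivity
  set β : ℝ := m * π / N with hβ
  have hβpos : 0 < β := by
    apply div_pos _ hN0
    exact mul_pos (by exact_mod_cast hm) Real.pi_pos
  have hβlt : β / 2 < π := by
    rw [div_lt_iff₀ (by norm_num : (0:ℝ) < 2)] at *
    rw [hβ, div_lt_iff₀ hN0]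
    calc (m:ℝ) * π < (2*(n+1) : ℕ) * π := by
          apply mul_lt_mul_of_pos_right _ Real.pi_pos
          exact_mod_cast hm2
      _ = π * 2 * N := by push_cast [hN]; ring
  have hs : Real.sin (β/2) ≠ 0 :=
    ne_of_gt (Real.sin_pos_of_pos_of_lt_pi (by positivity) hβlt)
  have key : ∀ k : ℕ, Real.sin ((↑(k+1) + 1/2) * β) - Real.sin ((k + 1/2) * β)
      = 2 * Real.sin (β/2) * Real.cos ((k+1) * β) := by
    intro k
    rw [Real.sin_sub_sin]
    push_cast
    ring_nf
  have tele : ∑ k ∈ Finset.range n, (Real.sin ((↑(k+1) + 1/2) * β) - Real.sin ((k + 1/2) * β))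
      = Real.sin ((n + 1/2) * β) - Real.sin (((0:ℕ) + 1/2) * β) :=
    Finset.sum_range_sub (fun k => Real.sin ((k + 1/2) * β)) n
  have sum2 : ∑ k ∈ Finset.range n, 2 * Real.sin (β/2) * Real.cos ((k+1) * β)
      = Real.sin ((n + 1/2) * β) - Real.sin (β/2) := by
    calc ∑ k ∈ Finset.range n, 2 * Real.sin (β/2) * Real.cos ((k+1) * β)
        = ∑ k ∈ Finset.range n, (Real.sin ((↑(k+1) + 1/2) * β) - Real.sin ((k + 1/2) * β)) :=
          Finset.sum_congr rfl (fun k _ => (key k).symm)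
      _ = Real.sin ((n + 1/2) * β) - Real.sin (((0:ℕ) + 1/2) * β) := tele
      _ = Real.sin ((n + 1/2) * β) - Real.sin (β/2) := by
          rw [show (((0:ℕ):ℝ) + 1/2) * β = β/2 by push_cast; ring]
  have hend : (n + 1/2) * β = m * π - β/2 := by
    rw [hβ, hN]
    field_simp
    ring
  have hsin_end : Real.sin ((n + 1/2) * β) = -((-1)^m * Real.sin (β/2)) := by
    rw [hend, Real.sin_nat_mul_pi_sub]
  have : (2 * Real.sin (β/2)) * ∑ k ∈ Finset.range n, Real.cos ((k+1) * β)
      = (-((-1)^m) - 1) * Real.sin (β/2) := by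
    rw [Finset.mul_sum]
    rw [sum2, hsin_end]; ring
  have hsum : ∑ k ∈ Finset.range n, Real.cos ((k+1) * β) = (-((-1)^m) - 1) / 2 := by
    have h2s : (2 * Real.sin (β/2)) ≠ 0 := by
      simp [hs]
    have h1 : (2 * (∑ k ∈ Finset.range n, Real.cos ((k+1) * β))) * Real.sin (β/2)
        = (-((-1)^m) - 1) * Real.sin (β/2) := by linear_combination this
    have h2 := mul_right_cancel₀ hs h1
    linarith
  rw [hsum]
  rcases Nat.even_or_odd m with he | ho
  · rw [if_pos he, he.neg_one_pow]; norm_num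
  · rw [if_neg (Nat.not_even_iff_odd.mpr ho), ho.neg_one_pow]; norm_num

lemma prod_to_sum (A B : ℝ) :
    2 * (Real.sin A * Real.sin B) = Real.cos (A - B) - Real.cos (A + B) := by
  rw [Real.cos_sub_cos]
  have hx : (A - B + (A + B))/2 = A := by ring
  have hy : (A - B - (A + B))/2 = -B := by ring
  rw [hx, hy, Real.sin_neg]
  ring

lemma sin_orth_lt (n p q : ℕ) (hq : 1 ≤ q) (hqp : q < p) (hp' : p ≤ n) :
    ∑ k ∈ Finset.range n,
      Real.sin ((k+1) * (p * π / (n+1))) * Real.sin ((k+1) * (q * π / (n+1))) = 0 := by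
  have key : ∀ k : ℕ, 2 * (Real.sin ((k+1) * (p * π / (n+1))) * Real.sin ((k+1) * (q * π / (n+1))))
      = Real.cos ((k+1) * ((p - q : ℕ) * π / (n+1))) - Real.cos ((k+1) * ((p + q : ℕ) * π / (n+1))) := by
    intro k
    rw [prod_to_sum]
    have h1 : ((k:ℝ)+1) * (p * π / (n+1)) - ((k:ℝ)+1) * (q * π / (n+1))
        = ((k:ℝ)+1) * (((p - q : ℕ) : ℝ) * π / (n+1)) := by
      rw [Nat.cast_sub hqp.le]; ring
    have h2 : ((k:ℝ)+1) * (p * π / (n+1)) + ((k:ℝ)+1) * (q * π / (n+1))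
        = ((k:ℝ)+1) * (((p + q : ℕ) : ℝ) * π / (n+1)) := by
      push_cast; ring
    rw [h1, h2]
  have h2 : ∑ k ∈ Finset.range n,
      (2:ℝ) * (Real.sin ((k+1) * (p * π / (n+1))) * Real.sin ((k+1) * (q * π / (n+1))))
      = (∑ k ∈ Finset.range n, Real.cos ((k+1) * ((p - q : ℕ) * π / (n+1))))
        - ∑ k ∈ Finset.range n, Real.cos ((k+1) * ((p + q : ℕ) * π / (n+1))) := by
    rw [← Finset.sum_sub_distrib]
    exact Finset.sum_congr rfl (fun k _ => key k)
  rw [cos_sum_eq n (p - q) (by omega) (by omega), cos_sum_eq n (p + q) (by omega) (by omega)] at h2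
  have hpar : Even (p - q) ↔ Even (p + q) := by
    rw [Nat.even_sub hqp.le, Nat.even_add]
  rw [← Finset.mul_sum] at h2
  by_cases he : Even (p - q)
  · rw [if_pos he, if_pos (hpar.mp he)] at h2; linarith
  · rw [if_neg he, if_neg (fun h => he (hpar.mpr h))] at h2; linarith

lemma sin_orth (n p q : ℕ) (hp : 1 ≤ p) (hp' : p ≤ n) (hq : 1 ≤ q) (hq' : q ≤ n) :
    ∑ k ∈ Finset.range n,
      Real.sin ((k+1) * (p * π / (n+1))) * Real.sin ((k+1) * (q * π / (n+1)))
      = if p = q then ((n:ℝ)+1)/2 else 0 := by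
  rcases lt_trichotomy p q with h | h | h
  · rw [if_neg h.ne]
    have := sin_orth_lt n q p hp h hq'
    rw [← this]
    exact Finset.sum_congr rfl (fun k _ => mul_comm _ _)
  · subst h
    rw [if_pos rfl]
    have key : ∀ k : ℕ, 2 * (Real.sin ((k+1) * (p * π / (n+1))) * Real.sin ((k+1) * (p * π / (n+1))))
        = 1 - Real.cos ((k+1) * ((p + p : ℕ) * π / (n+1))) := by
      intro k
      rw [prod_to_sum]
      have h1 : ((k:ℝ)+1) * (p * π / (n+1)) - ((k:ℝ)+1) * (p * π / (n+1)) = 0 := by ring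
      have h2 : ((k:ℝ)+1) * (p * π / (n+1)) + ((k:ℝ)+1) * (p * π / (n+1))
          = ((k:ℝ)+1) * (((p + p : ℕ) : ℝ) * π / (n+1)) := by push_cast; ring
      rw [h1, h2, Real.cos_zero]
    have h2 : ∑ k ∈ Finset.range n,
        (2:ℝ) * (Real.sin ((k+1) * (p * π / (n+1))) * Real.sin ((k+1) * (p * π / (n+1))))
        = (∑ _k ∈ Finset.range n, (1:ℝ))
          - ∑ k ∈ Finset.range n, Real.cos ((k+1) * ((p + p : ℕ) * π / (n+1))) := by
      rw [← Finset.sum_sub_distrib]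
      exact Finset.sum_congr rfl (fun k _ => key k)
    rw [cos_sum_eq n (p + p) (by omega) (by omega), if_pos ⟨p, by omega⟩] at h2
    simp only [Finset.sum_const, Finset.card_range, nsmul_eq_mul, mul_one] at h2
    rw [← Finset.mul_sum] at h2
    linarith
  · rw [if_neg h.ne']
    exact sin_orth_lt n p q hq h hp'

noncomputable def Smat (n : ℕ) : Matrix (Fin n) (Fin n) ℝ :=
  Matrix.of fun k j => Real.sin ((k.val+1) * ((j.val+1) * π / (n+1)))

noncomputable def Dmat (n : ℕ) : Matrix (Fin n) (Fin n) ℝ :=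
  Matrix.diagonal fun j => 2 * Real.cos ((j.val+1) * π / (n+1))

lemma sum_filter_eq_self (n c : ℕ) (w : ℕ → ℝ) :
    ∑ m ∈ Finset.range n, (if c = m then w m else 0) = if c < n then w c else 0 := by
  rw [Finset.sum_ite_eq]
  simp

lemma sum_filter_pred (n c : ℕ) (hc : c < n) (w : ℕ → ℝ) :
    ∑ m ∈ Finset.range n, (if m + 1 = c then w m else 0)
      = if 1 ≤ c then w (c-1) else 0 := by
  rcases Nat.eq_zero_or_pos c with h | h
  · subst h; simp
  · rw [if_pos (show 1 ≤ c by omega)]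
    obtain ⟨d, rfl⟩ : ∃ d, c = d + 1 := ⟨c - 1, by omega⟩
    have : ∀ m, (m + 1 = d + 1) = (d = m) := by intro m; rw [eq_iff_iff]; omega
    simp_rw [this]
    rw [sum_filter_eq_self, if_pos (by omega)]
    simp

lemma pathGraph_eigen (n : ℕ) :
    (SimpleGraph.pathGraph n).adjMatrix ℝ * Smat n = Smat n * Dmat n := by
  ext k j
  rw [Matrix.mul_apply]
  rw [Smat, Dmat, Matrix.mul_diagonal]
  set c : ℝ := (j.val+1) * π / (n+1) with hc
  have step1 : ∀ m : Fin n, (SimpleGraph.pathGraph n).adjMatrix ℝ k m * Matrix.of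
      (fun k j : Fin n => Real.sin ((k.val+1) * ((j.val+1) * π / (n+1)))) m j
      = (if (m.val + 1 = k.val) then Real.sin ((m.val+1) * c) else 0)
        + (if (k.val + 1 = m.val) then Real.sin ((m.val+1) * c) else 0) := by
    intro m
    rw [SimpleGraph.adjMatrix_apply, SimpleGraph.pathGraph_adj]
    rcases Classical.em (k.val + 1 = m.val) with h2 | h2
    · rw [if_pos (Or.inl h2), if_neg (by omega), if_pos h2]
      simp [hc]
    · rcases Classical.em (m.val + 1 = k.val) with h1 | h1
      · rw [if_pos (Or.inr h1), if_pos h1, if_neg h2]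
        simp [hc]
      · rw [if_neg (by tauto), if_neg h1, if_neg h2]
        simp
  rw [Finset.sum_congr rfl (fun m _ => step1 m), Finset.sum_add_distrib]
  have e1 : ∑ m : Fin n, (if (m.val + 1 = k.val) then Real.sin ((m.val+1) * c) else 0)
      = ∑ m ∈ Finset.range n, (if (m + 1 = k.val) then Real.sin ((m+1) * c) else 0) :=
    Fin.sum_univ_eq_sum_range (fun m => if (m + 1 = k.val) then Real.sin ((m+1) * c) else 0) n
  have e2 : ∑ m : Fin n, (if (k.val + 1 = m.val) then Real.sin ((m.val+1) * c) else 0)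
      = ∑ m ∈ Finset.range n, (if (k.val + 1 = m) then Real.sin ((m+1) * c) else 0) :=
    Fin.sum_univ_eq_sum_range (fun m => if (k.val + 1 = m) then Real.sin ((m+1) * c) else 0) n
  rw [e1, e2, sum_filter_pred n k.val k.isLt, sum_filter_eq_self]
  have hsum1 : (if 1 ≤ k.val then Real.sin ((↑(k.val-1)+1) * c) else 0)
      = Real.sin (k.val * c) := by
    rcases Nat.eq_zero_or_pos k.val with h | h
    · rw [if_neg (by omega), h]; simp
    · rw [if_pos (show 1 ≤ k.val by omega)]
      congr 2
      have : ((k.val - 1 : ℕ) : ℝ) = (k.val : ℝ) - 1 := by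
        rw [Nat.cast_sub h]; simp
      rw [this]; ring
  have hsum2 : (if k.val + 1 < n then Real.sin ((↑(k.val+1)+1) * c) else 0)
      = Real.sin ((k.val + 2) * c) := by
    rcases Classical.em (k.val + 1 < n) with h | h
    · rw [if_pos h]; push_cast; ring_nf
    · rw [if_neg h]
      have hk : k.val + 2 = n + 1 := by have := k.isLt; omega
      have harg : ((k.val : ℝ) + 2) * c = (j.val+1) * π := by
        rw [hc]
        have hn : ((k.val : ℝ) + 2) = (n : ℝ) + 1 := by exact_mod_cast congrArg (Nat.cast : ℕ → ℝ) hk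
        rw [hn]
        field_simp
      rw [harg]
      have := Real.sin_nat_mul_pi (j.val + 1)
      push_cast at this ⊢
      linarith [this]
  rw [hsum1, hsum2]
  have h1 : Real.sin (((k.val:ℝ) + 2) * c) = Real.sin (((k.val+1) * c) + c) := by congr 1; ring
  have h2 : Real.sin ((k.val:ℝ) * c) = Real.sin (((k.val+1) * c) - c) := by congr 1; ring
  rw [h1, h2, Real.sin_add, Real.sin_sub]
  have hOf : Matrix.of (fun k j : Fin n => Real.sin ((k.val+1) * ((j.val+1) * π / (n+1)))) k j
      = Real.sin ((k.val+1) * c) := rfl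
  rw [hOf]
  ring

lemma Smat_orth (n : ℕ) :
    (Smat n)ᵀ * Smat n = (((n:ℝ)+1)/2) • (1 : Matrix (Fin n) (Fin n) ℝ) := by
  ext j l
  have step : (((Smat n)ᵀ * Smat n) j l)
      = ∑ k : Fin n, (fun m : ℕ => Real.sin ((m+1) * ((j.val+1 : ℕ) * π / (n+1)))
          * Real.sin ((m+1) * ((l.val+1 : ℕ) * π / (n+1)))) k.val := by
    rw [Matrix.mul_apply]
    apply Finset.sum_congr rfl
    intro k _
    show Smat n k j * Smat n k l = _
    rw [Smat]
    push_cast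
    norm_num
  rw [step, Fin.sum_univ_eq_sum_range (fun m : ℕ => Real.sin ((m+1) * ((j.val+1 : ℕ) * π / (n+1)))
          * Real.sin ((m+1) * ((l.val+1 : ℕ) * π / (n+1)))) n,
    sin_orth n (j.val+1) (l.val+1) (by omega) (by omega) (by omega) (by omega)]
  have hiff : (j.val + 1 = l.val + 1) ↔ j = l := by
    rw [Fin.ext_iff]; omega
  rw [Matrix.smul_apply, Matrix.one_apply]
  by_cases h : j = l
  · rw [if_pos (hiff.mpr h), if_pos h]; simp
  · rw [if_neg (fun hh => h (hiff.mp hh)), if_neg h]; simp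



lemma trace_exp_path (n : ℕ) :
    Matrix.trace (NormedSpace.exp (-(((SimpleGraph.pathGraph n).adjMatrix ℝ) ^ 2))) =
      ∑ j ∈ Finset.Icc 1 n, Real.exp (-(4 * Real.cos (j * π / (n + 1)) ^ 2)) := by
  have hcoef : (2/((n:ℝ)+1)) * (((n:ℝ)+1)/2) = 1 := by
    have : ((n:ℝ)+1) ≠ 0 := by positivity
    field_simp
  have hleft : ((2/((n:ℝ)+1)) • (Smat n)ᵀ) * Smat n = 1 := by
    rw [Matrix.smul_mul, Smat_orth, smul_smul, hcoef, one_smul]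
  have hUnit : IsUnit (Smat n) := (Matrix.isUnit_iff_isUnit_det _).mpr (Matrix.isUnit_det_of_left_inverse hleft)
  have hdet : IsUnit (Smat n).det := (Matrix.isUnit_iff_isUnit_det _).mp hUnit
  have hinv : (Smat n)⁻¹ * Smat n = 1 := Matrix.nonsing_inv_mul _ hdet
  have hinv' : Smat n * (Smat n)⁻¹ = 1 := Matrix.mul_nonsing_inv _ hdet
  have hSDS : (SimpleGraph.pathGraph n).adjMatrix ℝ = Smat n * Dmat n * (Smat n)⁻¹ := by
    rw [← pathGraph_eigen, Matrix.mul_assoc, hinv', Matrix.mul_one]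
  have hA2 : -(((SimpleGraph.pathGraph n).adjMatrix ℝ) ^ 2)
      = Smat n * (-(Dmat n * Dmat n)) * (Smat n)⁻¹ := by
    rw [hSDS, pow_two]
    have : Smat n * Dmat n * (Smat n)⁻¹ * (Smat n * Dmat n * (Smat n)⁻¹)
        = Smat n * (Dmat n * Dmat n) * (Smat n)⁻¹ := by
      calc Smat n * Dmat n * (Smat n)⁻¹ * (Smat n * Dmat n * (Smat n)⁻¹)
          = Smat n * (Dmat n * (((Smat n)⁻¹ * Smat n) * (Dmat n * (Smat n)⁻¹))) := by
            simp only [Matrix.mul_assoc]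
        _ = Smat n * (Dmat n * Dmat n) * (Smat n)⁻¹ := by
            rw [hinv, Matrix.one_mul]; simp only [Matrix.mul_assoc]
    rw [this, Matrix.mul_neg, Matrix.neg_mul]
  rw [hA2, Matrix.exp_conj _ _ hUnit, Matrix.trace_mul_cycle, hinv,
    Matrix.one_mul]
  have hDD : -(Dmat n * Dmat n)
      = Matrix.diagonal (fun j : Fin n => -((2 * Real.cos ((j.val+1) * π / (n+1)))^2)) := by
    rw [Dmat, Matrix.diagonal_mul_diagonal, ← Matrix.diagonal_neg]
    have hfe : (fun i : Fin n => (2 * Real.cos ((i.val+1) * π / (n+1)))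
          * (2 * Real.cos ((i.val+1) * π / (n+1))))
        = fun j : Fin n => (2 * Real.cos ((j.val+1) * π / (n+1)))^2 := by
      funext j
      ring
    rw [hfe]
  rw [hDD, Matrix.exp_diagonal, Matrix.trace_diagonal]
  have hIcc : Finset.Icc 1 n = Finset.image (· + 1) (Finset.range n) := by
    ext x
    simp only [Finset.mem_Icc, Finset.mem_image, Finset.mem_range]
    constructor
    · rintro ⟨h1, h2⟩; exact ⟨x - 1, by omega, by omega⟩
    · rintro ⟨a, ha, rfl⟩; omega
  rw [hIcc, Finset.sum_image (by intro a _ b _ h; simp only at h; omega)]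
  rw [← Fin.sum_univ_eq_sum_range
    (fun m => Real.exp (-(4 * Real.cos ((m + 1 : ℕ) * π / (n + 1)) ^ 2))) n]
  apply Finset.sum_congr rfl
  intro i _
  rw [Pi.coe_exp, ← Real.exp_eq_exp_ℝ]
  congr 1
  push_cast
  ring



noncomputable def fφ : ℝ → ℝ := fun x => Real.exp (-(4 * Real.cos x ^ 2))

lemma fφ_cont : Continuous fφ := by
  unfold fφ
  exact Real.continuous_exp.comp (by continuity)

lemma fφ_le_one (x : ℝ) : |fφ x| ≤ 1 := by
  unfold fφ
  rw [abs_of_pos (Real.exp_pos _)]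
  apply Real.exp_le_one_iff.mpr
  rw [neg_nonpos]
  positivity

lemma exp_lip {a b : ℝ} (ha : a ≤ 0) (hb : b ≤ 0) : |Real.exp a - Real.exp b| ≤ |a - b| := by
  wlog h : b ≤ a generalizing a b
  · rw [abs_sub_comm, abs_sub_comm a b]; exact this hb ha (by linarith)
  rw [abs_of_nonneg (by linarith [Real.exp_le_exp.mpr h]), abs_of_nonneg (by linarith)]
  have h1 : Real.exp a * (1 + (b - a)) ≤ Real.exp b := by
    calc Real.exp a * (1 + (b - a)) ≤ Real.exp a * Real.exp (b - a) := by
          apply mul_le_mul_of_nonneg_left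
            (by linarith [Real.add_one_le_exp (b - a)] : (1 + (b - a)) ≤ Real.exp (b - a))
            (Real.exp_pos _).le
      _ = Real.exp b := by rw [← Real.exp_add]; ring_nf
  have h2 : Real.exp a ≤ 1 := Real.exp_le_one_iff.mpr ha
  nlinarith [Real.exp_pos a]

lemma fφ_lip (x y : ℝ) : |fφ x - fφ y| ≤ 8 * |x - y| := by
  unfold fφ
  have h1 : |(-(4 * Real.cos x ^ 2)) - (-(4 * Real.cos y ^ 2))| ≤ 8 * |x - y| := by
    have hc : |Real.cos x - Real.cos y| ≤ |x - y| := by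
      rw [Real.cos_sub_cos]
      calc |(-2) * Real.sin ((x + y)/2) * Real.sin ((x - y)/2)|
          = 2 * |Real.sin ((x + y)/2)| * |Real.sin ((x - y)/2)| := by
            rw [abs_mul, abs_mul]; norm_num
        _ ≤ 2 * 1 * |(x - y)/2| := by
            apply mul_le_mul (by
              apply mul_le_mul_of_nonneg_left (Real.abs_sin_le_one _) (by norm_num))
              (Real.abs_sin_le_abs) (abs_nonneg _) (by norm_num)
        _ = |x - y| := by rw [abs_div]; rw [abs_of_pos (by norm_num : (0:ℝ) < 2)]; ring
    have hcc : |Real.cos x + Real.cos y| ≤ 2 := by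
      calc |Real.cos x + Real.cos y| ≤ |Real.cos x| + |Real.cos y| := abs_add_le _ _
        _ ≤ 1 + 1 := add_le_add (Real.abs_cos_le_one x) (Real.abs_cos_le_one y)
        _ = 2 := by norm_num
    have key : (-(4 * Real.cos x ^ 2)) - (-(4 * Real.cos y ^ 2))
        = -4 * ((Real.cos x - Real.cos y) * (Real.cos x + Real.cos y)) := by ring
    rw [key, abs_mul, abs_mul]
    calc |(-4 : ℝ)| * (|Real.cos x - Real.cos y| * |Real.cos x + Real.cos y|)
        ≤ 4 * (|x - y| * 2) := by
          rw [show |(-4:ℝ)| = 4 by norm_num]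
          apply mul_le_mul_of_nonneg_left _ (by norm_num)
          exact mul_le_mul hc hcc (abs_nonneg _) (abs_nonneg _)
      _ = 8 * |x - y| := by ring
  calc |Real.exp (-(4 * Real.cos x ^ 2)) - Real.exp (-(4 * Real.cos y ^ 2))|
      ≤ |(-(4 * Real.cos x ^ 2)) - (-(4 * Real.cos y ^ 2))| := by
        apply exp_lip <;> · rw [neg_nonpos]; positivity
    _ ≤ 8 * |x - y| := h1

lemma integral_value : (∫ x in (0:ℝ)..π, fφ x) = π * (Real.exp (-2) * besselI 0 2) := by
  have hι : ∀ a b : ℝ, IntervalIntegrable (fun u => Real.exp (-2 * Real.cos u)) MeasureTheory.volume a b :=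
    fun a b => (Real.continuous_exp.comp (by continuity)).intervalIntegrable a b
  have step1 : (∫ x in (0:ℝ)..π, fφ x)
      = Real.exp (-2) * ∫ x in (0:ℝ)..π, Real.exp (-2 * Real.cos (2 * x)) := by
    rw [← intervalIntegral.integral_const_mul]
    apply intervalIntegral.integral_congr
    intro x _
    show Real.exp (-(4 * Real.cos x ^ 2)) = Real.exp (-2) * Real.exp (-2 * Real.cos (2 * x))
    rw [← Real.exp_add]
    congr 1
    have := Real.cos_sq x
    nlinarith [this]
  have step2 : (∫ x in (0:ℝ)..π, Real.exp (-2 * Real.cos (2 * x)))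
      = (2:ℝ)⁻¹ * ∫ u in (0:ℝ)..(2*π), Real.exp (-2 * Real.cos u) := by
    have := intervalIntegral.integral_comp_mul_left (a := (0:ℝ)) (b := π)
      (fun u => Real.exp (-2 * Real.cos u)) (two_ne_zero)
    rw [this]
    norm_num
  have step3 : (∫ u in (0:ℝ)..(2*π), Real.exp (-2 * Real.cos u))
      = (∫ u in (0:ℝ)..π, Real.exp (-2 * Real.cos u))
        + ∫ u in π..(2*π), Real.exp (-2 * Real.cos u) :=
    (intervalIntegral.integral_add_adjacent_intervals (hι 0 π) (hι π (2*π))).symm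
  have step4 : (∫ u in π..(2*π), Real.exp (-2 * Real.cos u))
      = ∫ x in (0:ℝ)..π, Real.exp (2 * Real.cos x) := by
    have := intervalIntegral.integral_comp_add_right (a := (0:ℝ)) (b := π)
      (fun u => Real.exp (-2 * Real.cos u)) π
    rw [show (0:ℝ) + π = π by ring, show π + π = 2*π by ring] at this
    rw [← this]
    apply intervalIntegral.integral_congr
    intro x _
    simp only [Real.cos_add_pi]
    ring_nf
  have step5 : (∫ u in (0:ℝ)..π, Real.exp (-2 * Real.cos u))
      = ∫ x in (0:ℝ)..π, Real.exp (2 * Real.cos x) := by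
    have := intervalIntegral.integral_comp_sub_left (a := (0:ℝ)) (b := π)
      (fun u => Real.exp (-2 * Real.cos u)) π
    rw [show π - π = 0 by ring, show π - 0 = π by ring] at this
    rw [← this]
    apply intervalIntegral.integral_congr
    intro x _
    simp only [Real.cos_pi_sub]
    ring_nf
  have hbessel : besselI 0 2 = (1/π) * ∫ x in (0:ℝ)..π, Real.exp (2 * Real.cos x) := by
    unfold besselI
    congr 1
    apply intervalIntegral.integral_congr
    intro x _
    norm_num
  rw [step1, step2, step3, step4, step5, hbessel]
  have hπ : (π:ℝ) ≠ 0 := Real.pi_ne_zero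
  field_simp
  ring


lemma riemann_bound (n : ℕ) :
    |(∑ k ∈ Finset.range n, fφ (((k:ℝ)+1) * (π/((n:ℝ)+1))) * (π/((n:ℝ)+1)))
      - ∫ x in (0:ℝ)..π, fφ x| ≤ (8*π+1) * (π/((n:ℝ)+1)) := by
  set h : ℝ := π/((n:ℝ)+1) with hh_def
  have hh : 0 < h := by positivity
  have hint : ∀ a b : ℝ, IntervalIntegrable fφ MeasureTheory.volume a b :=
    fun a b => fφ_cont.intervalIntegrable a b
  have hsplit : (∫ x in (0:ℝ)..π, fφ x)
      = ∑ k ∈ Finset.range (n+1), ∫ x in ((k:ℝ)*h)..(((k:ℝ)+1)*h), fφ x := by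
    have h0 := intervalIntegral.sum_integral_adjacent_intervals
      (a := fun k : ℕ => (k:ℝ)*h) (n := n+1) (f := fφ) (fun k _ => hint _ _)
    have h1 : ∑ k ∈ Finset.range (n+1), ∫ x in ((k:ℝ)*h)..((((k+1):ℕ):ℝ)*h), fφ x
        = ∫ x in (((0:ℕ):ℝ)*h)..((((n+1):ℕ):ℝ)*h), fφ x := h0
    rw [show (((0:ℕ)):ℝ)*h = 0 by norm_num, show ((((n+1):ℕ)):ℝ)*h = π by
      push_cast; rw [hh_def]; field_simp] at h1
    rw [← h1]
    apply Finset.sum_congr rfl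
    intro k _
    congr 1
    push_cast
    ring
  have hterm : ∀ k : ℕ, |(∫ x in ((k:ℝ)*h)..(((k:ℝ)+1)*h), fφ x) - fφ (((k:ℝ)+1)*h) * h|
      ≤ 8*h*h := by
    intro k
    have hconst : fφ (((k:ℝ)+1)*h) * h
        = ∫ _x in ((k:ℝ)*h)..(((k:ℝ)+1)*h), fφ (((k:ℝ)+1)*h) := by
      rw [intervalIntegral.integral_const, smul_eq_mul]
      ring
    rw [hconst, ← intervalIntegral.integral_sub (hint _ _) intervalIntegrable_const]
    have hb : ∀ x ∈ Set.uIoc ((k:ℝ)*h) (((k:ℝ)+1)*h),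
        ‖fφ x - fφ (((k:ℝ)+1)*h)‖ ≤ 8*h := by
      intro x hx
      rw [Set.uIoc_of_le (by nlinarith : (k:ℝ)*h ≤ ((k:ℝ)+1)*h)] at hx
      obtain ⟨hx1, hx2⟩ := hx
      rw [Real.norm_eq_abs]
      calc |fφ x - fφ (((k:ℝ)+1)*h)| ≤ 8 * |x - (((k:ℝ)+1)*h)| := fφ_lip _ _
        _ ≤ 8 * h := by
            apply mul_le_mul_of_nonneg_left _ (by norm_num)
            rw [abs_of_nonpos (by linarith)]
            nlinarith
    have := intervalIntegral.norm_integral_le_of_norm_le_const hb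
    rw [Real.norm_eq_abs] at this
    calc |∫ x in ((k:ℝ)*h)..(((k:ℝ)+1)*h), (fφ x - fφ (((k:ℝ)+1)*h))|
        ≤ 8*h * |(((k:ℝ)+1)*h) - (k:ℝ)*h| := this
      _ = 8*h*h := by rw [show (((k:ℝ)+1)*h) - (k:ℝ)*h = h by ring, abs_of_pos hh]
  have hlast : |∫ x in ((n:ℝ)*h)..(((n:ℝ)+1)*h), fφ x| ≤ h := by
    have hb : ∀ x ∈ Set.uIoc ((n:ℝ)*h) (((n:ℝ)+1)*h), ‖fφ x‖ ≤ 1 :=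
      fun x _ => by rw [Real.norm_eq_abs]; exact fφ_le_one x
    have := intervalIntegral.norm_integral_le_of_norm_le_const hb
    rw [Real.norm_eq_abs, show (((n:ℝ)+1)*h) - (n:ℝ)*h = h by ring, abs_of_pos hh,
      one_mul] at this
    exact this
  have key : (∑ k ∈ Finset.range n, fφ (((k:ℝ)+1) * h) * h) - ∫ x in (0:ℝ)..π, fφ x
      = (∑ k ∈ Finset.range n,
          (fφ (((k:ℝ)+1) * h) * h - ∫ x in ((k:ℝ)*h)..(((k:ℝ)+1)*h), fφ x))
        - ∫ x in ((n:ℝ)*h)..(((n:ℝ)+1)*h), fφ x := by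
    rw [hsplit, Finset.sum_range_succ, Finset.sum_sub_distrib]
    ring
  rw [key]
  have habs : |(∑ k ∈ Finset.range n,
        (fφ (((k:ℝ)+1) * h) * h - ∫ x in ((k:ℝ)*h)..(((k:ℝ)+1)*h), fφ x))
      - ∫ x in ((n:ℝ)*h)..(((n:ℝ)+1)*h), fφ x|
      ≤ (∑ k ∈ Finset.range n, (8*h*h)) + h := by
    calc |(∑ k ∈ Finset.range n,
          (fφ (((k:ℝ)+1) * h) * h - ∫ x in ((k:ℝ)*h)..(((k:ℝ)+1)*h), fφ x))
        - ∫ x in ((n:ℝ)*h)..(((n:ℝ)+1)*h), fφ x|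
        ≤ |∑ k ∈ Finset.range n,
            (fφ (((k:ℝ)+1) * h) * h - ∫ x in ((k:ℝ)*h)..(((k:ℝ)+1)*h), fφ x)|
          + |∫ x in ((n:ℝ)*h)..(((n:ℝ)+1)*h), fφ x| := abs_sub _ _
      _ ≤ (∑ k ∈ Finset.range n, (8*h*h)) + h := by
          apply add_le_add _ hlast
          calc |∑ k ∈ Finset.range n,
              (fφ (((k:ℝ)+1) * h) * h - ∫ x in ((k:ℝ)*h)..(((k:ℝ)+1)*h), fφ x)|
              ≤ ∑ k ∈ Finset.range n,
                |fφ (((k:ℝ)+1) * h) * h - ∫ x in ((k:ℝ)*h)..(((k:ℝ)+1)*h), fφ x| :=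
                Finset.abs_sum_le_sum_abs _ _
            _ ≤ ∑ k ∈ Finset.range n, (8*h*h) := by
                apply Finset.sum_le_sum
                intro k _
                rw [abs_sub_comm]
                exact hterm k
  calc _ ≤ (∑ k ∈ Finset.range n, (8*h*h)) + h := habs
    _ = 8*h*((n:ℝ)*h) + h := by rw [Finset.sum_const, Finset.card_range]; push_cast; ring
    _ ≤ 8*h*π + h := by
        have hnh : (n:ℝ)*h ≤ π := by
          rw [hh_def]
          calc (n:ℝ)*(π/((n:ℝ)+1)) = π * ((n:ℝ)/((n:ℝ)+1)) := by ring
            _ ≤ π * 1 := by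
                apply mul_le_mul_of_nonneg_left _ Real.pi_pos.le
                rw [div_le_one (by positivity)]
                linarith
            _ = π := mul_one π
        nlinarith
    _ = (8*π+1) * h := by ring

lemma riemann_tendsto :
    Tendsto (fun n : ℕ => ∑ k ∈ Finset.range n, fφ (((k:ℝ)+1) * (π/((n:ℝ)+1))) * (π/((n:ℝ)+1)))
      atTop (nhds (∫ x in (0:ℝ)..π, fφ x)) := by
  rw [tendsto_iff_dist_tendsto_zero]
  apply squeeze_zero (fun n => dist_nonneg)
    (g := fun n : ℕ => (8*π+1) * (π/((n:ℝ)+1)))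
    (fun n => by rw [Real.dist_eq]; exact riemann_bound n)
  have h1 : Tendsto (fun n : ℕ => π/((n:ℝ)+1)) atTop (nhds 0) := by
    have := tendsto_one_div_add_atTop_nhds_zero_nat.const_mul π
    rw [mul_zero] at this
    convert this using 2 with n
    ring
  have := h1.const_mul (8*π+1)
  rw [mul_zero] at this
  exact this



/-- For the path `P_n`, `H(P_n) = Σ_{j=1}^n exp(-4 cos²(jπ/(n+1)))`, and
`H(P_n)/n → e^{-2} I₀(2)` as `n → ∞`. -/
theorem gaussian_estrada_pathGraph :
    (∀ n : ℕ,
        Matrix.trace (NormedSpace.exp (-(((SimpleGraph.pathGraph n).adjMatrix ℝ) ^ 2))) =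
          ∑ j ∈ Finset.Icc 1 n, Real.exp (-(4 * Real.cos (j * π / (n + 1)) ^ 2))) ∧
      Tendsto (fun n : ℕ =>
          Matrix.trace (NormedSpace.exp (-(((SimpleGraph.pathGraph n).adjMatrix ℝ) ^ 2))) /
            (n : ℝ))
        atTop (nhds (Real.exp (-2) * besselI 0 2)) := by
  constructor
  · exact trace_exp_path
  · have hratio : Tendsto (fun n : ℕ => ((n:ℝ)+1)/(π*(n:ℝ))) atTop (nhds (1/π)) := by
      have h0 : Tendsto (fun n : ℕ => (1 + 1/(n:ℝ)) * (1/π)) atTop (nhds ((1+0) * (1/π))) :=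
        (tendsto_one_div_atTop_nhds_zero_nat.const_add 1).mul_const (1/π)
      rw [show ((1:ℝ)+0) * (1/π) = 1/π by norm_num] at h0
      apply h0.congr'
      filter_upwards [eventually_ge_atTop 1] with n hn
      have hn0 : (n:ℝ) ≠ 0 := by positivity
      have hπ : (π:ℝ) ≠ 0 := Real.pi_ne_zero
      field_simp
    have hmain : Tendsto (fun n : ℕ =>
        (∑ k ∈ Finset.range n, fφ (((k:ℝ)+1) * (π/((n:ℝ)+1))) * (π/((n:ℝ)+1)))
          * (((n:ℝ)+1)/(π*(n:ℝ))))
        atTop (nhds ((∫ x in (0:ℝ)..π, fφ x) * (1/π))) :=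
      riemann_tendsto.mul hratio
    rw [integral_value] at hmain
    rw [show (π * (Real.exp (-2) * besselI 0 2)) * (1/π) = Real.exp (-2) * besselI 0 2 by
      field_simp] at hmain
    apply hmain.congr'
    filter_upwards [eventually_ge_atTop 1] with n hn
    rw [trace_exp_path n]
    have hIcc : Finset.Icc 1 n = Finset.image (· + 1) (Finset.range n) := by
      ext x
      simp only [Finset.mem_Icc, Finset.mem_image, Finset.mem_range]
      constructor
      · rintro ⟨h1, h2⟩; exact ⟨x - 1, by omega, by omega⟩
      · rintro ⟨a, ha, rfl⟩; omega
    rw [hIcc, Finset.sum_image (by intro a _ b _ h; simp only at h; omega)]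
    have hsum_eq : ∀ k : ℕ, Real.exp (-(4 * Real.cos ((↑(k+1)) * π / ((n:ℝ) + 1)) ^ 2))
        = fφ (((k:ℝ)+1) * (π/((n:ℝ)+1))) := by
      intro k
      unfold fφ
      congr 2
      push_cast
      ring
    rw [Finset.sum_congr rfl (fun k _ => hsum_eq k), ← Finset.sum_mul]
    have hn0 : (n:ℝ) ≠ 0 := by
      have : (1:ℕ) ≤ n := hn
      positivity
    have hπ : (π:ℝ) ≠ 0 := Real.pi_ne_zero
    have hn1 : ((n:ℝ)+1) ≠ 0 := by positivity
    field_simp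
    ring_nf
    exact Finset.sum_congr rfl (fun x _ => by congr 1; ring)
end

section
/- The semicircle integral for the Gaussian Estrada index of Erdős–Rényi graphs evaluates as (4/(π r²))·∫_0^r √(r² - λ²)·e^{-λ²} dλ = e^{-r²/2}·(I_0(r²/2) + I_1(r²/2)) for every r > 0. -/
open scoped Real

lemma substA (r : ℝ) (hr : 0 < r) :
    (∫ l in (0:ℝ)..r, Real.sqrt (r ^ 2 - l ^ 2) * Real.exp (-l ^ 2))
      = r ^ 2 * ∫ θ in (0:ℝ)..(π/2),
          Real.cos θ ^ 2 * Real.exp (-(r * Real.sin θ) ^ 2) := by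
  have h := intervalIntegral.integral_comp_smul_deriv (a := 0) (b := π/2)
    (f := fun θ => r * Real.sin θ) (f' := fun θ => r * Real.cos θ)
    (g := fun l => Real.sqrt (r ^ 2 - l ^ 2) * Real.exp (-l ^ 2))
    (fun t _ => (Real.hasDerivAt_sin t).const_mul r)
    (by fun_prop)
    (by fun_prop)
  simp only [Real.sin_zero, mul_zero, Real.sin_pi_div_two, mul_one] at h
  rw [← h, ← intervalIntegral.integral_const_mul]
  apply intervalIntegral.integral_congr
  intro t ht
  rw [Set.uIcc_of_le (by positivity)] at ht
  have hc : 0 ≤ Real.cos t :=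
    Real.cos_nonneg_of_mem_Icc ⟨by linarith [ht.1, Real.pi_pos], ht.2⟩
  have hs : Real.sqrt (r ^ 2 - (r * Real.sin t) ^ 2) = r * Real.cos t := by
    have he : r ^ 2 - (r * Real.sin t) ^ 2 = (r * Real.cos t) ^ 2 := by
      have := Real.sin_sq_add_cos_sq t; nlinarith
    rw [he, Real.sqrt_sq (by positivity)]
  simp only [smul_eq_mul, Function.comp]
  rw [hs]; ring

/-- The semicircle integral for the Gaussian Estrada index of Erdős–Rényi graphs:
`(4/(π r²)) ∫₀^r √(r² - λ²) e^{-λ²} dλ = e^{-r²/2} (I₀(r²/2) + I₁(r²/2))` for `r > 0`. -/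
theorem semicircle_gaussian_integral (r : ℝ) (hr : 0 < r) :
    (4 / (π * r ^ 2)) * ∫ l in (0:ℝ)..r, Real.sqrt (r ^ 2 - l ^ 2) * Real.exp (-l ^ 2) =
      Real.exp (-r ^ 2 / 2) * (besselI 0 (r ^ 2 / 2) + besselI 1 (r ^ 2 / 2)) := by
  set x : ℝ := r ^ 2 / 2 with hxdef
  have hb : besselI 0 x + besselI 1 x
      = (1/π) * ∫ θ in (0:ℝ)..π, (1 + Real.cos θ) * Real.exp (x * Real.cos θ) := by
    unfold besselI
    rw [← mul_add, ← intervalIntegral.integral_add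
      (Continuous.intervalIntegrable (by fun_prop) _ _)
      (Continuous.intervalIntegrable (by fun_prop) _ _)]
    congr 1
    apply intervalIntegral.integral_congr
    intro t _
    simp [add_mul]
  have hc : (∫ θ in (0:ℝ)..π, (1 + Real.cos θ) * Real.exp (x * Real.cos θ))
      = 2 * ∫ φ in (0:ℝ)..(π/2),
          (1 + Real.cos (2*φ)) * Real.exp (x * Real.cos (2*φ)) := by
    have h := intervalIntegral.integral_comp_mul_left (a := 0) (b := π/2)
      (fun θ => (1 + Real.cos θ) * Real.exp (x * Real.cos θ)) (two_ne_zero)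
    rw [mul_zero, (by ring : (2:ℝ) * (π/2) = π)] at h
    rw [h]
    simp only [smul_eq_mul]
    ring
  have heq : (∫ φ in (0:ℝ)..(π/2), (1 + Real.cos (2*φ)) * Real.exp (x * Real.cos (2*φ)))
      = (2 * Real.exp x) * ∫ φ in (0:ℝ)..(π/2),
          Real.cos φ ^ 2 * Real.exp (-(r * Real.sin φ) ^ 2) := by
    rw [← intervalIntegral.integral_const_mul]
    apply intervalIntegral.integral_congr
    intro t _
    have h1 : 1 + Real.cos (2*t) = 2 * Real.cos t ^ 2 := by
      rw [Real.cos_two_mul]; ring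
    have h2 : x * Real.cos (2*t) = x + (-(r * Real.sin t) ^ 2) := by
      rw [Real.cos_two_mul, hxdef]
      have := Real.sin_sq_add_cos_sq t
      nlinarith
    simp only []
    rw [h1, h2, Real.exp_add]; ring
  rw [substA r hr, hb, hc, heq]
  have hπ : π ≠ 0 := Real.pi_ne_zero
  have hrx : (-r ^ 2 / 2 : ℝ) = -x := by rw [hxdef]; ring
  rw [hrx, Real.exp_neg]
  have hex : Real.exp x ≠ 0 := Real.exp_ne_zero x
  field_simp
  ring
end

section
/- For the complete bipartite graph K_{n1,n2}, the off-diagonal Gaussian communicability between two distinct vertices p, q in the same part V_1 equals (exp(-A^2))_pq = (e^{-n1·n2} - 1)/n1, and between vertices in different parts it equals 0. -/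
open scoped Classical

open NormedSpace

/-- If `M ^ 2 = c • M` with `c ≠ 0`, then `exp ℝ M = 1 + ((e^c - 1)/c) • M`. -/
lemma exp_of_sq_eq_smul {m : Type*} [Fintype m] [DecidableEq m]
    (M : Matrix m m ℝ) (c : ℝ) (hc : c ≠ 0) (h : M ^ 2 = c • M) :
    exp M = 1 + ((Real.exp c - 1) / c) • M := by
  letI : SeminormedRing (Matrix m m ℝ) := Matrix.linftyOpSemiNormedRing
  letI : NormedRing (Matrix m m ℝ) := Matrix.linftyOpNormedRing
  letI : NormedAlgebra ℝ (Matrix m m ℝ) := Matrix.linftyOpNormedAlgebra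
  have hpow : ∀ j : ℕ, M ^ (j + 1) = c ^ j • M := by
    intro j
    induction j with
    | zero => simp
    | succ j ih =>
      rw [pow_succ, ih, Matrix.smul_mul, ← pow_two, h, smul_smul, pow_succ]
  have h1 : Summable fun j : ℕ => c ^ (j + 1) / (Nat.factorial (j + 1) : ℝ) :=
    (expSeries_div_summable c).comp_injective Nat.succ_injective
  have hs : Summable fun j : ℕ => ((Nat.factorial (j + 1) : ℝ))⁻¹ * c ^ j := by
    have := h1.mul_left c⁻¹
    refine this.congr fun j => ?_
    rw [pow_succ]
    field_simp
  have hsum : (∑' j : ℕ, ((Nat.factorial (j + 1) : ℝ))⁻¹ * c ^ j) = (Real.exp c - 1) / c := by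
    have hexp : Real.exp c = 1 + ∑' j : ℕ, c ^ (j + 1) / (Nat.factorial (j + 1) : ℝ) := by
      rw [Real.exp_eq_exp_ℝ, exp_eq_tsum_div]
      dsimp only
      rw [Summable.tsum_eq_zero_add (expSeries_div_summable c)]
      simp
    have hmul : c * ∑' j : ℕ, ((Nat.factorial (j + 1) : ℝ))⁻¹ * c ^ j
        = ∑' j : ℕ, c ^ (j + 1) / (Nat.factorial (j + 1) : ℝ) := by
      rw [← tsum_mul_left]
      refine tsum_congr fun j => ?_
      rw [pow_succ]
      field_simp
      try ring
    rw [eq_div_iff hc, mul_comm, hmul, hexp]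
    ring
  rw [exp_eq_tsum ℝ]
  dsimp only
  rw [Summable.tsum_eq_zero_add (by exact expSeries_summable' (𝕂 := ℝ) M)]
  simp only [pow_zero, Nat.factorial_zero, Nat.cast_one, inv_one, one_smul]
  congr 1
  have heq : ∀ j : ℕ, ((Nat.factorial (j + 1) : ℝ))⁻¹ • M ^ (j + 1)
      = (((Nat.factorial (j + 1) : ℝ))⁻¹ * c ^ j) • M := by
    intro j
    rw [hpow, smul_smul]
  simp_rw [heq]
  rw [Summable.tsum_smul_const hs, hsum]

/-- Off-diagonal Gaussian communicability in `K_{n1,n2}`: for distinct vertices `p ≠ q` in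
the same part of size `n1`, `(exp(-A²))_pq = (e^{-n1 n2} - 1)/n1`, and the entry is `0`
when `p` and `q` lie in different parts. -/
theorem gaussian_communicability_completeBipartiteGraph (n₁ n₂ : ℕ)
    (h₁ : 1 ≤ n₁) (h₂ : 1 ≤ n₂) :
    (∀ p q : Fin n₁, p ≠ q →
        NormedSpace.exp (-(((completeBipartiteGraph (Fin n₁) (Fin n₂)).adjMatrix ℝ) ^ 2))
            (Sum.inl p) (Sum.inl q) =
          (Real.exp (-((n₁ : ℝ) * n₂)) - 1) / n₁) ∧
      (∀ (p : Fin n₁) (q : Fin n₂),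
        NormedSpace.exp (-(((completeBipartiteGraph (Fin n₁) (Fin n₂)).adjMatrix ℝ) ^ 2))
            (Sum.inl p) (Sum.inr q) = 0) := by
  set A := (completeBipartiteGraph (Fin n₁) (Fin n₂)).adjMatrix ℝ with hA
  set B : Matrix (Fin n₁ ⊕ Fin n₂) (Fin n₁ ⊕ Fin n₂) ℝ :=
    Matrix.of (fun i j => match i, j with
      | Sum.inl _, Sum.inl _ => (n₂ : ℝ)
      | Sum.inr _, Sum.inr _ => (n₁ : ℝ)
      | _, _ => 0) with hB
  have hn₁ : (n₁ : ℝ) ≠ 0 := Nat.cast_ne_zero.mpr (by omega)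
  have hn₂ : (n₂ : ℝ) ≠ 0 := Nat.cast_ne_zero.mpr (by omega)
  have hA2 : A ^ 2 = B := by
    ext i j
    rw [pow_two, Matrix.mul_apply]
    rcases i with p | p <;> rcases j with q | q <;>
      simp [hA, hB, Fintype.sum_sum_type, Matrix.of_apply]
  have hB2 : B ^ 2 = ((n₁ : ℝ) * n₂) • B := by
    ext i j
    rw [pow_two, Matrix.mul_apply]
    rcases i with p | p <;> rcases j with q | q <;>
      simp [hB, Fintype.sum_sum_type, Matrix.of_apply, Finset.sum_const] <;> ring
  have hM2 : (-(A ^ 2)) ^ 2 = (-((n₁ : ℝ) * n₂)) • (-(A ^ 2)) := by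
    rw [neg_sq, smul_neg, neg_smul, neg_neg, hA2, hB2]
  have hc : (-((n₁ : ℝ) * n₂)) ≠ 0 := by
    simp [hn₁, hn₂]
  have hexp := exp_of_sq_eq_smul (-(A ^ 2)) _ hc hM2
  constructor
  · intro p q hpq
    rw [hexp]
    rw [Matrix.add_apply, Matrix.smul_apply, Matrix.one_apply_ne (by simp [hpq]),
      Matrix.neg_apply, hA2]
    simp only [hB, Matrix.of_apply]
    field_simp
    have hh : (n₁ : ℝ) * n₂ * (n₁ : ℝ)⁻¹ * (n₂ : ℝ)⁻¹ = 1 := by field_simp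
    linear_combination (Real.exp (-((n₁ : ℝ) * n₂)) - 1) * hh
  · intro p q
    rw [hexp]
    rw [Matrix.add_apply, Matrix.smul_apply, Matrix.one_apply_ne (by simp),
      Matrix.neg_apply, hA2]
    simp [hB]
end
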